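/- arXiv:1901.08470 — 4 statements merged into one kernel-verified Lean document; each statement's English description precedes it below -/
import Mathlib

section
/- Let G be a t.d.l.c. group and H an open subgroup of G. Then, as Q[H]-bimodules, the rational discrete standard bimodule Bi(H) is isomorphic to a direct summand of Bi(G). -/
noncomputable section
set_option linter.unusedVariables false
set_option linter.unusedSectionVars false
set_option maxHeartbeats 1000000

/-- The canonical projection `G/V → G/U` of coset spaces, for `V ≤ U`. -/
def cosetProj {G : Type} [Group G] {V U : Subgroup G} (h : V ≤ U) : G ⧸ V → G ⧸ U :=
  Quotient.map' id fun a b hab =>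
    QuotientGroup.leftRel_apply.mpr (h (QuotientGroup.leftRel_apply.mp hab))

/-- A realization of the rational discrete standard bimodule `Bi(G)` of a t.d.l.c. group `G`:
a `ℚ`-module with commuting discrete left and right `G`-actions, equipped with compatible
injective left-equivariant maps from the modules `ℚ[G/U]`, `U` compact open, which are
compatible with the transition maps `η_{U,V} (xU) = (1/[U:V]) ∑ xrV`, on which the right
`G`-action is given by `(xU)·g = (xg)(g⁻¹Ug)`, and which jointly cover `Bi(G)` (so that `Bi(G)`
is the direct limit `colim_U ℚ[G/U]`). -/
structure RatStandardBimodule (G : Type) [Group G] [TopologicalSpace G] where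
  B : Type
  [acg : AddCommGroup B]
  [mod : Module ℚ B]
  l : G → B →ₗ[ℚ] B
  l_one : ∀ b, l 1 b = b
  l_mul : ∀ g h b, l (g * h) b = l g (l h b)
  r : G → B →ₗ[ℚ] B
  r_one : ∀ b, r 1 b = b
  r_mul : ∀ g h b, r (g * h) b = r h (r g b)
  lr_comm : ∀ g h b, l g (r h b) = r h (l g b)
  l_discrete : ∀ b, IsOpen {g : G | l g b = b}
  r_discrete : ∀ b, IsOpen {g : G | r g b = b}
  ι : ∀ U : Subgroup G, IsOpen (U : Set G) → IsCompact (U : Set G) →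
      ((G ⧸ U) →₀ ℚ) →ₗ[ℚ] B
  ι_injective : ∀ U hU hU', Function.Injective (ι U hU hU')
  ι_left : ∀ U hU hU' (g : G) (f : (G ⧸ U) →₀ ℚ),
      ι U hU hU' (Finsupp.mapDomain (fun w : G ⧸ U => g • w) f) = l g (ι U hU hU' f)
  ι_right : ∀ U hU hU' (g x : G)
      (hU2 : IsOpen ((U.comap (MulAut.conj g).toMonoidHom : Subgroup G) : Set G))
      (hU2' : IsCompact ((U.comap (MulAut.conj g).toMonoidHom : Subgroup G) : Set G)),
      r g (ι U hU hU' (Finsupp.single ((x : G) : G ⧸ U) 1)) =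
        ι (U.comap (MulAut.conj g).toMonoidHom) hU2 hU2'
          (Finsupp.single ((x * g : G) : G ⧸ U.comap (MulAut.conj g).toMonoidHom) 1)
  ι_compat : ∀ (U V : Subgroup G) (hVU : V ≤ U) (hU : IsOpen (U : Set G))
      (hU' : IsCompact (U : Set G)) (hV : IsOpen (V : Set G)) (hV' : IsCompact (V : Set G))
      (x : G),
      (V.relIndex U : ℚ) • ι U hU hU' (Finsupp.single ((x : G) : G ⧸ U) 1) =
        ∑ᶠ w ∈ {w : G ⧸ V | cosetProj hVU w = ((x : G) : G ⧸ U)},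
          ι V hV hV' (Finsupp.single w 1)
  ι_jointly_surjective : ∀ b : B, ∃ U hU hU' f, ι U hU hU' f = b

attribute [instance] RatStandardBimodule.acg RatStandardBimodule.mod

namespace BiProof

open Finsupp

variable {K : Type} [Group K] [TopologicalSpace K] [IsTopologicalGroup K]

theorem cosetProj_mk {V U : Subgroup K} (h : V ≤ U) (x : K) :
    cosetProj h ((x : K ⧸ V)) = (x : K ⧸ U) := rfl

theorem cosetProj_comp {W V U : Subgroup K} (hWV : W ≤ V) (hVU : V ≤ U) (w : K ⧸ W) :
    cosetProj hVU (cosetProj hWV w) = cosetProj (hWV.trans hVU) w := by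
  induction w using QuotientGroup.induction_on with
  | _ x => rfl

theorem cosetProj_refl {U : Subgroup K} (w : K ⧸ U) : cosetProj (le_refl U) w = w := by
  induction w using QuotientGroup.induction_on with
  | _ x => rfl

theorem cosetProj_smul {V U : Subgroup K} (h : V ≤ U) (g : K) (w : K ⧸ V) :
    cosetProj h (g • w) = g • cosetProj h w := by
  induction w using QuotientGroup.induction_on with
  | _ x => rfl

def fib {V U : Subgroup K} (h : V ≤ U) (c : K ⧸ U) : Set (K ⧸ V) := {w | cosetProj h w = c}

theorem mem_fib {V U : Subgroup K} {h : V ≤ U} {c : K ⧸ U} {w : K ⧸ V} :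
    w ∈ fib h c ↔ cosetProj h w = c := Iff.rfl

theorem fib_finite {V U : Subgroup K} (h : V ≤ U) (hV : IsOpen (V : Set K))
    (hU' : IsCompact (U : Set K)) (c : K ⧸ U) : (fib h c).Finite := by
  have : DiscreteTopology (K ⧸ V) := QuotientGroup.discreteTopology hV
  induction c using QuotientGroup.induction_on with
  | _ x =>
    have hsub : fib h ((x : K ⧸ U)) ⊆
        (QuotientGroup.mk '' ((x * ·) '' (U : Set K)) : Set (K ⧸ V)) := by
      rintro w hw
      induction w using QuotientGroup.induction_on with
      | _ y =>
        have hyx : ((y : K ⧸ U)) = ((x : K ⧸ U)) := (cosetProj_mk h y) ▸ hw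
        have hy : x⁻¹ * y ∈ U := QuotientGroup.eq.mp hyx.symm
        exact ⟨y, ⟨x⁻¹ * y, hy, by group⟩, rfl⟩
    exact Set.Finite.subset (((hU'.image (continuous_mul_left x)).image
      continuous_quotient_mk').finite_of_discrete) hsub

def jmap {V U : Subgroup K} (h : V ≤ U) (x : K) : ↥U ⧸ V.subgroupOf U → K ⧸ V :=
  Quotient.map' (fun u => x * u) fun a b hab => by
    have h1 : (a⁻¹ * b : ↥U) ∈ V.subgroupOf U := QuotientGroup.leftRel_apply.mp hab
    rw [Subgroup.mem_subgroupOf] at h1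
    refine QuotientGroup.leftRel_apply.mpr ?_
    have : (a : K)⁻¹ * b ∈ V := by simpa using h1
    simpa [mul_assoc, mul_inv_rev] using this

theorem jmap_mk {V U : Subgroup K} (h : V ≤ U) (x : K) (u : ↥U) :
    jmap h x ((u : ↥U ⧸ V.subgroupOf U)) = ((x * u : K) : K ⧸ V) := rfl

theorem jmap_injective {V U : Subgroup K} (h : V ≤ U) (x : K) :
    Function.Injective (jmap h x) := by
  intro a b hab
  induction a using QuotientGroup.induction_on with
  | _ u =>
  induction b using QuotientGroup.induction_on with
  | _ v =>
    have h1 : (x * u : K)⁻¹ * (x * v) ∈ V := QuotientGroup.eq.mp hab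
    have h2 : (u⁻¹ * v : ↥U) ∈ V.subgroupOf U := by
      rw [Subgroup.mem_subgroupOf]
      have : (u : K)⁻¹ * v ∈ V := by simpa [mul_assoc, mul_inv_rev] using h1
      simpa using this
    exact QuotientGroup.eq.mpr h2

theorem range_jmap {V U : Subgroup K} (h : V ≤ U) (x : K) :
    Set.range (jmap h x) = fib h ((x : K ⧸ U)) := by
  ext w
  constructor
  · rintro ⟨d, rfl⟩
    induction d using QuotientGroup.induction_on with
    | _ u =>
      rw [jmap_mk, mem_fib, cosetProj_mk]
      exact QuotientGroup.eq.mpr (by simpa using u.2)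
  · intro hw
    induction w using QuotientGroup.induction_on with
    | _ y =>
      have hyx : ((y : K ⧸ U)) = ((x : K ⧸ U)) := (cosetProj_mk h y) ▸ hw
      have hy : x⁻¹ * y ∈ U := QuotientGroup.eq.mp hyx.symm
      refine ⟨((⟨x⁻¹ * y, hy⟩ : ↥U) : ↥U ⧸ V.subgroupOf U), ?_⟩
      rw [jmap_mk]
      congr 1
      group

theorem relindex_eq_card_fib {V U : Subgroup K} (h : V ≤ U) (c : K ⧸ U) :
    V.relIndex U = Nat.card (fib h c) := by
  induction c using QuotientGroup.induction_on with
  | _ x =>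
    rw [← range_jmap h x, Nat.card_range_of_injective (jmap_injective h x)]
    rfl

theorem relindex_cast_ne_zero {V U : Subgroup K} (h : V ≤ U) (hV : IsOpen (V : Set K))
    (hU' : IsCompact (U : Set K)) : (V.relIndex U : ℚ) ≠ 0 := by
  have h0 : V.relIndex U ≠ 0 := by
    rw [relindex_eq_card_fib h ((1 : K) : K ⧸ U)]
    have hfin := fib_finite h hV hU' ((1 : K) : K ⧸ U)
    have hf : Finite (fib h ((1 : K) : K ⧸ U)) := hfin.to_subtype
    have hne : ((1 : K) : K ⧸ V) ∈ fib h ((1 : K) : K ⧸ U) := cosetProj_mk h 1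
    exact Nat.card_ne_zero.mpr ⟨⟨⟨_, hne⟩⟩, hf⟩
  exact Nat.cast_ne_zero.mpr h0

def tfun {V U : Subgroup K} (h : V ≤ U) (hV : IsOpen (V : Set K)) (hU' : IsCompact (U : Set K))
    (c : K ⧸ U) : (K ⧸ V) →₀ ℚ :=
  (V.relIndex U : ℚ)⁻¹ • (fib_finite h hV hU' c).toFinset.sum fun w => Finsupp.single w 1

def eta {V U : Subgroup K} (h : V ≤ U) (hV : IsOpen (V : Set K)) (hU' : IsCompact (U : Set K)) :
    ((K ⧸ U) →₀ ℚ) →ₗ[ℚ] ((K ⧸ V) →₀ ℚ) :=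
  Finsupp.linearCombination ℚ (tfun h hV hU')

theorem eta_single {V U : Subgroup K} (h : V ≤ U) (hV : IsOpen (V : Set K))
    (hU' : IsCompact (U : Set K)) (c : K ⧸ U) :
    eta h hV hU' (Finsupp.single c 1) = tfun h hV hU' c := by
  rw [eta, Finsupp.linearCombination_single, one_smul]

/-- Reduce an equality of linear maps out of `ℚ[K ⧸ U]` to basis vectors `single c 1`. -/
theorem qf_ext {U : Subgroup K} {M : Type*} [AddCommGroup M] [Module ℚ M]
    {φ ψ : ((K ⧸ U) →₀ ℚ) →ₗ[ℚ] M}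
    (h : ∀ c : K ⧸ U, φ (Finsupp.single c 1) = ψ (Finsupp.single c 1)) : φ = ψ := by
  apply Finsupp.lhom_ext
  intro a b
  have hb : (Finsupp.single a b) = b • Finsupp.single a (1 : ℚ) := by
    rw [Finsupp.smul_single, smul_eq_mul, mul_one]
  rw [hb, map_smul, map_smul, h]

variable (BK : RatStandardBimodule K)

theorem iota_tfun {V U : Subgroup K} (h : V ≤ U) (hU : IsOpen (U : Set K))
    (hU' : IsCompact (U : Set K)) (hV : IsOpen (V : Set K)) (hV' : IsCompact (V : Set K))
    (c : K ⧸ U) :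
    BK.ι U hU hU' (Finsupp.single c 1) = BK.ι V hV hV' (tfun h hV hU' c) := by
  induction c using QuotientGroup.induction_on with
  | _ x =>
  have hcompat := BK.ι_compat U V h hU hU' hV hV' x
  have hset : {w : K ⧸ V | cosetProj h w = ((x : K) : K ⧸ U)} =
      ((fib_finite h hV hU' ((x : K) : K ⧸ U)).toFinset : Set (K ⧸ V)) := by
    rw [Set.Finite.coe_toFinset]; rfl
  rw [hset, finsum_mem_coe_finset] at hcompat
  rw [tfun, map_smul, map_sum]
  rw [← hcompat, smul_smul, inv_mul_cancel₀ (relindex_cast_ne_zero h hV hU'), one_smul]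

theorem iota_eta {V U : Subgroup K} (h : V ≤ U) (hU : IsOpen (U : Set K))
    (hU' : IsCompact (U : Set K)) (hV : IsOpen (V : Set K)) (hV' : IsCompact (V : Set K))
    (f : (K ⧸ U) →₀ ℚ) :
    BK.ι U hU hU' f = BK.ι V hV hV' (eta h hV hU' f) := by
  have : BK.ι U hU hU' = (BK.ι V hV hV').comp (eta h hV hU') := by
    apply qf_ext
    intro c
    rw [LinearMap.comp_apply, eta_single, iota_tfun BK h hU hU' hV hV']
  rw [this]; rfl

theorem iota_congr {A B : Subgroup K} (hAB : A = B) (hA : IsOpen (A : Set K))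
    (hA' : IsCompact (A : Set K)) (hB : IsOpen (B : Set K)) (hB' : IsCompact (B : Set K))
    (x : K) :
    BK.ι A hA hA' (Finsupp.single ((x : K ⧸ A)) 1) =
      BK.ι B hB hB' (Finsupp.single ((x : K ⧸ B)) 1) := by
  subst hAB; rfl

theorem tfun_comp {W V U : Subgroup K} (hWV : W ≤ V) (hVU : V ≤ U)
    (hW : IsOpen (W : Set K)) (hV : IsOpen (V : Set K)) (hV' : IsCompact (V : Set K))
    (hU' : IsCompact (U : Set K)) (c : K ⧸ U) :
    eta hWV hW hV' (tfun hVU hV hU' c) = tfun (hWV.trans hVU) hW hU' c := by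
  classical
  rw [tfun, map_smul, map_sum]
  have h1 : ∀ w ∈ (fib_finite hVU hV hU' c).toFinset,
      eta hWV hW hV' (Finsupp.single w 1) =
        (W.relIndex V : ℚ)⁻¹ • (fib_finite hWV hW hV' w).toFinset.sum
          fun w' => Finsupp.single w' 1 := fun w _ => eta_single hWV hW hV' w
  rw [Finset.sum_congr rfl h1, ← Finset.smul_sum, smul_smul]
  have hfibs : ∀ w ∈ (fib_finite hVU hV hU' c).toFinset,
      (fib_finite hWV hW hV' w).toFinset =
        (fib_finite (hWV.trans hVU) hW hU' c).toFinset.filter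
          (fun w' => cosetProj hWV w' = w) := by
    intro w hw
    rw [Set.Finite.mem_toFinset] at hw
    ext w'
    rw [Set.Finite.mem_toFinset, Finset.mem_filter, Set.Finite.mem_toFinset, mem_fib, mem_fib]
    constructor
    · intro hww'
      refine ⟨?_, hww'⟩
      rw [← cosetProj_comp hWV hVU, hww', hw]
    · exact fun hh => hh.2
  have hsum : ((fib_finite hVU hV hU' c).toFinset.sum fun w =>
      (fib_finite hWV hW hV' w).toFinset.sum fun w' => Finsupp.single w' (1:ℚ)) =
      (fib_finite (hWV.trans hVU) hW hU' c).toFinset.sum fun w' => Finsupp.single w' (1:ℚ) := by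
    rw [Finset.sum_congr rfl (fun w hw => by rw [hfibs w hw])]
    refine Finset.sum_fiberwise_of_maps_to ?_ _
    intro w' hw'
    rw [Set.Finite.mem_toFinset, mem_fib] at hw'
    rw [Set.Finite.mem_toFinset, mem_fib, cosetProj_comp hWV hVU, hw']
  rw [hsum, tfun]
  congr 1
  rw [← Subgroup.relIndex_mul_relIndex W V U hWV hVU, Nat.cast_mul, mul_inv, mul_comm]

theorem eta_comp {W V U : Subgroup K} (hWV : W ≤ V) (hVU : V ≤ U)
    (hW : IsOpen (W : Set K)) (hV : IsOpen (V : Set K)) (hV' : IsCompact (V : Set K))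
    (hU' : IsCompact (U : Set K)) (f : (K ⧸ U) →₀ ℚ) :
    eta hWV hW hV' (eta hVU hV hU' f) = eta (hWV.trans hVU) hW hU' f := by
  have : (eta hWV hW hV').comp (eta hVU hV hU') = eta (hWV.trans hVU) hW hU' := by
    apply qf_ext
    intro c
    rw [LinearMap.comp_apply, eta_single, eta_single, tfun_comp]
  calc eta hWV hW hV' (eta hVU hV hU' f) = ((eta hWV hW hV').comp (eta hVU hV hU')) f := rfl
  _ = eta (hWV.trans hVU) hW hU' f := by rw [this]

theorem eta_self {U : Subgroup K} (hU : IsOpen (U : Set K)) (hU' : IsCompact (U : Set K))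
    (f : (K ⧸ U) →₀ ℚ) : eta (le_refl U) hU hU' f = f := by
  have : eta (le_refl U) hU hU' = LinearMap.id := by
    apply qf_ext
    intro c
    rw [LinearMap.id_apply, eta_single, tfun]
    have hT : (fib_finite (le_refl U) hU hU' c).toFinset = {c} := by
      ext w
      rw [Set.Finite.mem_toFinset, mem_fib, cosetProj_refl, Finset.mem_singleton]
    rw [hT, Finset.sum_singleton, Subgroup.relIndex_self, Nat.cast_one, inv_one, one_smul]
  rw [this]; rfl

theorem inf_isOpen {U V : Subgroup K} (hU : IsOpen (U : Set K)) (hV : IsOpen (V : Set K)) :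
    IsOpen ((U ⊓ V : Subgroup K) : Set K) := by
  rw [Subgroup.coe_inf]; exact hU.inter hV

theorem inf_isCompact {U V : Subgroup K} (hU' : IsCompact (U : Set K))
    (hV : IsOpen (V : Set K)) : IsCompact ((U ⊓ V : Subgroup K) : Set K) := by
  rw [Subgroup.coe_inf]; exact hU'.inter_right (Subgroup.isClosed_of_isOpen V hV)

theorem exists_extend {M : Type} [AddCommGroup M] [Module ℚ M]
    (Φ : ∀ U : Subgroup K, IsOpen (U : Set K) → IsCompact (U : Set K) →
      (((K ⧸ U) →₀ ℚ) →ₗ[ℚ] M))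
    (hΦ : ∀ (U V : Subgroup K) (hVU : V ≤ U) (hU : IsOpen (U : Set K))
      (hU' : IsCompact (U : Set K)) (hV : IsOpen (V : Set K)) (hV' : IsCompact (V : Set K))
      (f : (K ⧸ U) →₀ ℚ), Φ U hU hU' f = Φ V hV hV' (eta hVU hV hU' f)) :
    ∃ L : BK.B →ₗ[ℚ] M, ∀ U hU hU' f, L (BK.ι U hU hU' f) = Φ U hU hU' f := by
  have WD : ∀ (U : Subgroup K) hU hU' f (V : Subgroup K) hV hV' g,
      BK.ι U hU hU' f = BK.ι V hV hV' g → Φ U hU hU' f = Φ V hV hV' g := by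
    intro U hU hU' f V hV hV' g hfg
    have hWo : IsOpen ((U ⊓ V : Subgroup K) : Set K) := inf_isOpen hU hV
    have hWc : IsCompact ((U ⊓ V : Subgroup K) : Set K) := inf_isCompact hU' hV
    have h1 : BK.ι (U ⊓ V) hWo hWc (eta inf_le_left hWo hU' f) =
        BK.ι (U ⊓ V) hWo hWc (eta inf_le_right hWo hV' g) := by
      rw [← iota_eta BK inf_le_left hU hU' hWo hWc f,
        ← iota_eta BK inf_le_right hV hV' hWo hWc g]
      exact hfg
    have h2 := BK.ι_injective _ hWo hWc h1
    rw [hΦ U (U ⊓ V) inf_le_left hU hU' hWo hWc f,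
      hΦ V (U ⊓ V) inf_le_right hV hV' hWo hWc g, h2]
  choose Us hUs hUs' fs hfs using BK.ι_jointly_surjective
  have key : ∀ (U : Subgroup K) hU hU' f,
      Φ (Us (BK.ι U hU hU' f)) (hUs _) (hUs' _) (fs _) = Φ U hU hU' f :=
    fun U hU hU' f => WD _ _ _ _ _ _ _ _ (hfs _)
  refine ⟨⟨⟨fun b => Φ (Us b) (hUs b) (hUs' b) (fs b), ?_⟩, ?_⟩, fun U hU hU' f => key U hU hU' f⟩
  · intro a b
    conv_lhs => rw [← hfs a, ← hfs b]
    set Ua := Us a; set Ub := Us b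
    have hWo : IsOpen ((Ua ⊓ Ub : Subgroup K) : Set K) := inf_isOpen (hUs a) (hUs b)
    have hWc : IsCompact ((Ua ⊓ Ub : Subgroup K) : Set K) := inf_isCompact (hUs' a) (hUs b)
    have hab : BK.ι Ua (hUs a) (hUs' a) (fs a) + BK.ι Ub (hUs b) (hUs' b) (fs b) =
        BK.ι (Ua ⊓ Ub) hWo hWc
          (eta inf_le_left hWo (hUs' a) (fs a) + eta inf_le_right hWo (hUs' b) (fs b)) := by
      rw [map_add, ← iota_eta BK inf_le_left (hUs a) (hUs' a) hWo hWc,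
        ← iota_eta BK inf_le_right (hUs b) (hUs' b) hWo hWc]
    rw [hab]
    have := WD (Us (BK.ι (Ua ⊓ Ub) hWo hWc
        (eta inf_le_left hWo (hUs' a) (fs a) + eta inf_le_right hWo (hUs' b) (fs b))))
      (hUs _) (hUs' _) (fs _) (Ua ⊓ Ub) hWo hWc _ (hfs _)
    rw [this, map_add]
    rw [← hΦ Ua (Ua ⊓ Ub) inf_le_left (hUs a) (hUs' a) hWo hWc (fs a),
      ← hΦ Ub (Ua ⊓ Ub) inf_le_right (hUs b) (hUs' b) hWo hWc (fs b)]
  · intro q a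
    simp only [RingHom.id_apply]
    conv_lhs => rw [← hfs a]
    have h1 : q • BK.ι (Us a) (hUs a) (hUs' a) (fs a) =
        BK.ι (Us a) (hUs a) (hUs' a) (q • fs a) := (map_smul _ q _).symm
    rw [h1]
    have := WD (Us (BK.ι (Us a) (hUs a) (hUs' a) (q • fs a))) (hUs _) (hUs' _) (fs _)
      (Us a) (hUs a) (hUs' a) _ (hfs _)
    rw [this, map_smul]

end BiProof

namespace BiProof

variable {K : Type} [Group K] [TopologicalSpace K] [IsTopologicalGroup K]

/-- Left translation on `ℚ[K ⧸ U]`. -/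
def lmap (g : K) (U : Subgroup K) : ((K ⧸ U) →₀ ℚ) →ₗ[ℚ] ((K ⧸ U) →₀ ℚ) :=
  Finsupp.lmapDomain ℚ ℚ (fun w : K ⧸ U => g • w)

theorem lmap_single (g : K) (U : Subgroup K) (c : K ⧸ U) :
    lmap g U (Finsupp.single c 1) = Finsupp.single (g • c) 1 := by
  rw [lmap, Finsupp.lmapDomain_apply, Finsupp.mapDomain_single]

theorem fib_smul {V U : Subgroup K} (h : V ≤ U) (g : K) (c : K ⧸ U) :
    fib h (g • c) = (fun w : K ⧸ V => g • w) '' fib h c := by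
  ext w'
  constructor
  · intro hw'
    refine ⟨g⁻¹ • w', ?_, smul_inv_smul g w'⟩
    rw [mem_fib, cosetProj_smul, mem_fib.mp hw', inv_smul_smul]
  · rintro ⟨w, hw, rfl⟩
    rw [mem_fib, cosetProj_smul, mem_fib.mp hw]

theorem tfun_lmap {V U : Subgroup K} (h : V ≤ U) (hV : IsOpen (V : Set K))
    (hU' : IsCompact (U : Set K)) (g : K) (c : K ⧸ U) :
    tfun h hV hU' (g • c) = lmap g V (tfun h hV hU' c) := by
  classical
  rw [tfun, tfun, map_smul, map_sum]
  congr 1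
  have hT : (fib_finite h hV hU' (g • c)).toFinset =
      (fib_finite h hV hU' c).toFinset.image (fun w => g • w) := by
    ext w'
    rw [Set.Finite.mem_toFinset, Finset.mem_image, fib_smul h g c]
    constructor
    · rintro ⟨w, hw, rfl⟩
      exact ⟨w, Set.Finite.mem_toFinset _ |>.mpr hw, rfl⟩
    · rintro ⟨w, hw, rfl⟩
      exact ⟨w, Set.Finite.mem_toFinset _ |>.mp hw, rfl⟩
  rw [hT, Finset.sum_image (fun a _ b _ hab => MulAction.injective g hab)]
  exact Finset.sum_congr rfl fun w _ => (lmap_single g V w).symm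

theorem eta_lmap {V U : Subgroup K} (h : V ≤ U) (hV : IsOpen (V : Set K))
    (hU' : IsCompact (U : Set K)) (g : K) (f : (K ⧸ U) →₀ ℚ) :
    eta h hV hU' (lmap g U f) = lmap g V (eta h hV hU' f) := by
  have : (eta h hV hU').comp (lmap g U) = (lmap g V).comp (eta h hV hU') := by
    apply qf_ext
    intro c
    rw [LinearMap.comp_apply, LinearMap.comp_apply, lmap_single, eta_single, eta_single,
      tfun_lmap]
  calc eta h hV hU' (lmap g U f) = ((eta h hV hU').comp (lmap g U)) f := rfl
  _ = lmap g V (eta h hV hU' f) := by rw [this]; rfl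

/-- The conjugate subgroup `g⁻¹ U g`. -/
def conjS (g : K) (U : Subgroup K) : Subgroup K := U.comap (MulAut.conj g).toMonoidHom

theorem mem_conjS {g x : K} {U : Subgroup K} : x ∈ conjS g U ↔ g * x * g⁻¹ ∈ U := by
  rw [conjS, Subgroup.mem_comap]
  rfl

theorem conjS_coe (g : K) (U : Subgroup K) :
    (conjS g U : Set K) = (fun x => g⁻¹ * x * g) '' (U : Set K) := by
  ext x
  constructor
  · intro hx
    exact ⟨g * x * g⁻¹, mem_conjS.mp hx, by group⟩
  · rintro ⟨u, hu, rfl⟩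
    rw [SetLike.mem_coe, mem_conjS]
    have : g * (g⁻¹ * u * g) * g⁻¹ = u := by group
    rw [this]; exact hu

theorem conjS_isOpen {g : K} {U : Subgroup K} (hU : IsOpen (U : Set K)) :
    IsOpen ((conjS g U : Subgroup K) : Set K) := by
  have : ((conjS g U : Subgroup K) : Set K) = (fun x => g * x * g⁻¹) ⁻¹' (U : Set K) := by
    ext x; rw [SetLike.mem_coe, mem_conjS]; rfl
  rw [this]
  exact hU.preimage (by continuity)

theorem conjS_isCompact {g : K} {U : Subgroup K} (hU' : IsCompact (U : Set K)) :
    IsCompact ((conjS g U : Subgroup K) : Set K) := by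
  rw [conjS_coe]
  exact hU'.image (by continuity)

theorem conjS_le (g : K) {V U : Subgroup K} (h : V ≤ U) : conjS g V ≤ conjS g U :=
  fun x hx => mem_conjS.mpr (h (mem_conjS.mp hx))

/-- Right translation `K ⧸ U → K ⧸ g⁻¹Ug`. -/
def rtrans (g : K) (U : Subgroup K) : K ⧸ U → K ⧸ conjS g U :=
  Quotient.map' (· * g) fun a b hab => by
    have h1 : a⁻¹ * b ∈ U := QuotientGroup.leftRel_apply.mp hab
    refine QuotientGroup.leftRel_apply.mpr (mem_conjS.mpr ?_)
    have : g * ((a * g)⁻¹ * (b * g)) * g⁻¹ = a⁻¹ * b := by group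
    rw [this]; exact h1

theorem rtrans_mk (g : K) (U : Subgroup K) (x : K) :
    rtrans g U ((x : K ⧸ U)) = ((x * g : K) : K ⧸ conjS g U) := rfl

theorem rtrans_injective (g : K) (U : Subgroup K) : Function.Injective (rtrans g U) := by
  intro a b hab
  induction a using QuotientGroup.induction_on with
  | _ x =>
  induction b using QuotientGroup.induction_on with
  | _ y =>
    have h1 : (x * g)⁻¹ * (y * g) ∈ conjS g U := QuotientGroup.eq.mp hab
    rw [mem_conjS] at h1
    have : g * ((x * g)⁻¹ * (y * g)) * g⁻¹ = x⁻¹ * y := by group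
    rw [this] at h1
    exact QuotientGroup.eq.mpr h1

def rmap (g : K) (U : Subgroup K) : ((K ⧸ U) →₀ ℚ) →ₗ[ℚ] ((K ⧸ conjS g U) →₀ ℚ) :=
  Finsupp.lmapDomain ℚ ℚ (rtrans g U)

theorem rmap_single (g : K) (U : Subgroup K) (c : K ⧸ U) :
    rmap g U (Finsupp.single c 1) = Finsupp.single (rtrans g U c) 1 := by
  rw [rmap, Finsupp.lmapDomain_apply, Finsupp.mapDomain_single]

theorem cosetProj_rtrans {V U : Subgroup K} (h : V ≤ U) (g : K) (w : K ⧸ V) :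
    cosetProj (conjS_le g h) (rtrans g V w) = rtrans g U (cosetProj h w) := by
  induction w using QuotientGroup.induction_on with
  | _ x => rfl

theorem fib_rtrans {V U : Subgroup K} (h : V ≤ U) (g : K) (c : K ⧸ U) :
    fib (conjS_le g h) (rtrans g U c) = rtrans g V '' fib h c := by
  ext w'
  constructor
  · intro hw'
    induction w' using QuotientGroup.induction_on with
    | _ z =>
      have hz : ((z * g⁻¹ : K) : K ⧸ conjS g V) = ((z : K) : K ⧸ conjS g V) ∨ True := Or.inr trivial
      refine ⟨((z * g⁻¹ : K) : K ⧸ V), ?_, ?_⟩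
      · rw [mem_fib]
        apply rtrans_injective g U
        rw [← cosetProj_rtrans h g, rtrans_mk]
        have : z * g⁻¹ * g = z := by group
        rw [this]
        exact mem_fib.mp hw'
      · rw [rtrans_mk]
        congr 1
        group
  · rintro ⟨w, hw, rfl⟩
    rw [mem_fib, cosetProj_rtrans h, mem_fib.mp hw]

theorem relindex_conjS (g : K) {V U : Subgroup K} (h : V ≤ U) :
    (conjS g V).relIndex (conjS g U) = V.relIndex U := by
  rw [relindex_eq_card_fib (conjS_le g h) (rtrans g U ((1 : K) : K ⧸ U)),
    fib_rtrans h g, relindex_eq_card_fib h ((1 : K) : K ⧸ U)]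
  rw [Nat.card_coe_set_eq, Nat.card_coe_set_eq,
    Set.ncard_image_of_injective _ (rtrans_injective g V)]

theorem tfun_rmap {V U : Subgroup K} (h : V ≤ U) (hV : IsOpen (V : Set K))
    (hU' : IsCompact (U : Set K)) (g : K)
    (hV2 : IsOpen ((conjS g V : Subgroup K) : Set K))
    (hU2' : IsCompact ((conjS g U : Subgroup K) : Set K)) (c : K ⧸ U) :
    tfun (conjS_le g h) hV2 hU2' (rtrans g U c) = rmap g V (tfun h hV hU' c) := by
  classical
  rw [tfun, tfun, map_smul, map_sum, relindex_conjS g h]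
  congr 1
  have hT : (fib_finite (conjS_le g h) hV2 hU2' (rtrans g U c)).toFinset =
      (fib_finite h hV hU' c).toFinset.image (rtrans g V) := by
    ext w'
    rw [Set.Finite.mem_toFinset, Finset.mem_image, fib_rtrans h g]
    constructor
    · rintro ⟨w, hw, rfl⟩
      exact ⟨w, Set.Finite.mem_toFinset _ |>.mpr hw, rfl⟩
    · rintro ⟨w, hw, rfl⟩
      exact ⟨w, Set.Finite.mem_toFinset _ |>.mp hw, rfl⟩
  rw [hT, Finset.sum_image (fun a _ b _ hab => rtrans_injective g V hab)]
  exact Finset.sum_congr rfl fun w _ => (rmap_single g V w).symm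

theorem eta_rmap {V U : Subgroup K} (h : V ≤ U) (hV : IsOpen (V : Set K))
    (hU' : IsCompact (U : Set K)) (g : K)
    (hV2 : IsOpen ((conjS g V : Subgroup K) : Set K))
    (hU2' : IsCompact ((conjS g U : Subgroup K) : Set K)) (f : (K ⧸ U) →₀ ℚ) :
    eta (conjS_le g h) hV2 hU2' (rmap g U f) = rmap g V (eta h hV hU' f) := by
  have : (eta (conjS_le g h) hV2 hU2').comp (rmap g U) = (rmap g V).comp (eta h hV hU') := by
    apply qf_ext
    intro c
    rw [LinearMap.comp_apply, LinearMap.comp_apply, rmap_single, eta_single, eta_single,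
      tfun_rmap h hV hU' g hV2 hU2']
  calc eta (conjS_le g h) hV2 hU2' (rmap g U f) =
      ((eta (conjS_le g h) hV2 hU2').comp (rmap g U)) f := rfl
  _ = rmap g V (eta h hV hU' f) := by rw [this]; rfl

variable (BK : RatStandardBimodule K)

theorem iota_lmap {U : Subgroup K} (hU : IsOpen (U : Set K)) (hU' : IsCompact (U : Set K))
    (g : K) (f : (K ⧸ U) →₀ ℚ) :
    BK.ι U hU hU' (lmap g U f) = BK.l g (BK.ι U hU hU' f) := by
  rw [lmap, Finsupp.lmapDomain_apply]
  exact BK.ι_left U hU hU' g f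

theorem iota_rmap {U : Subgroup K} (hU : IsOpen (U : Set K)) (hU' : IsCompact (U : Set K))
    (g : K) (hU2 : IsOpen ((conjS g U : Subgroup K) : Set K))
    (hU2' : IsCompact ((conjS g U : Subgroup K) : Set K)) (f : (K ⧸ U) →₀ ℚ) :
    BK.r g (BK.ι U hU hU' f) = BK.ι (conjS g U) hU2 hU2' (rmap g U f) := by
  have : (BK.r g).comp (BK.ι U hU hU') = (BK.ι (conjS g U) hU2 hU2').comp (rmap g U) := by
    apply qf_ext
    intro c
    induction c using QuotientGroup.induction_on with
    | _ x =>
      rw [LinearMap.comp_apply, LinearMap.comp_apply, rmap_single, rtrans_mk]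
      exact BK.ι_right U hU hU' g x hU2 hU2'
  calc BK.r g (BK.ι U hU hU' f) = ((BK.r g).comp (BK.ι U hU hU')) f := rfl
  _ = BK.ι (conjS g U) hU2 hU2' (rmap g U f) := by rw [this]; rfl

end BiProof

namespace BiProof

section Specific

variable {G : Type} [Group G] [TopologicalSpace G] [IsTopologicalGroup G]
  {H : Subgroup G} (hHopen : IsOpen (H : Set G))

theorem subgroupOf_isCompact (hHopen : IsOpen (H : Set G)) {V : Subgroup G} (hVc : IsCompact (V : Set G)) :
    IsCompact ((V.subgroupOf H : Subgroup ↥H) : Set ↥H) := by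
  have hcoe : ((V.subgroupOf H : Subgroup ↥H) : Set ↥H) =
      (Subtype.val : ↥H → G) ⁻¹' (V : Set G) := rfl
  rw [hcoe]
  exact ((Subgroup.isClosed_of_isOpen H hHopen).isClosedEmbedding_subtypeVal).isCompact_preimage
    hVc

def upSub (U' : Subgroup ↥H) : Subgroup G := U'.map H.subtype

theorem mem_upSub {U' : Subgroup ↥H} {x : G} :
    x ∈ upSub U' ↔ ∃ z : ↥H, z ∈ U' ∧ (z : G) = x := by
  rw [upSub, Subgroup.mem_map]
  simp

theorem upSub_le (U' : Subgroup ↥H) : upSub U' ≤ H := by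
  intro x hx
  obtain ⟨z, _, rfl⟩ := mem_upSub.mp hx
  exact z.2

theorem upSub_mono {V' U' : Subgroup ↥H} (h : V' ≤ U') : upSub V' ≤ upSub U' :=
  Subgroup.map_mono h

theorem upSub_isOpen (hHopen : IsOpen (H : Set G)) {U' : Subgroup ↥H} (hU'o : IsOpen (U' : Set ↥H)) :
    IsOpen ((upSub U' : Subgroup G) : Set G) := by
  have hcoe : ((upSub U' : Subgroup G) : Set G) = Subtype.val '' (U' : Set ↥H) := by
    ext x
    rw [SetLike.mem_coe, mem_upSub]
    constructor
    · rintro ⟨z, hz, rfl⟩; exact ⟨z, hz, rfl⟩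
    · rintro ⟨z, hz, rfl⟩; exact ⟨z, hz, rfl⟩
  rw [hcoe]
  exact hHopen.isOpenMap_subtype_val _ hU'o

theorem upSub_isCompact {U' : Subgroup ↥H} (hU'c : IsCompact (U' : Set ↥H)) :
    IsCompact ((upSub U' : Subgroup G) : Set G) := by
  have hcoe : ((upSub U' : Subgroup G) : Set G) = Subtype.val '' (U' : Set ↥H) := by
    ext x
    rw [SetLike.mem_coe, mem_upSub]
    constructor
    · rintro ⟨z, hz, rfl⟩; exact ⟨z, hz, rfl⟩
    · rintro ⟨z, hz, rfl⟩; exact ⟨z, hz, rfl⟩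
  rw [hcoe]
  exact hU'c.image continuous_subtype_val

/-- `H/(V ∩ H) → G/V`. -/
def phiH (V : Subgroup G) (hVH : V ≤ H) : ↥H ⧸ V.subgroupOf H → G ⧸ V :=
  Quotient.map' Subtype.val fun a b hab => by
    have h1 : (a⁻¹ * b : ↥H) ∈ V.subgroupOf H := QuotientGroup.leftRel_apply.mp hab
    rw [Subgroup.mem_subgroupOf] at h1
    refine QuotientGroup.leftRel_apply.mpr ?_
    simpa using h1

theorem phiH_mk (V : Subgroup G) (hVH : V ≤ H) (y : ↥H) :
    phiH V hVH ((y : ↥H ⧸ V.subgroupOf H)) = ((y : G) : G ⧸ V) := rfl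

theorem phiH_injective (V : Subgroup G) (hVH : V ≤ H) : Function.Injective (phiH V hVH) := by
  intro a b hab
  induction a using QuotientGroup.induction_on with
  | _ y =>
  induction b using QuotientGroup.induction_on with
  | _ z =>
    have h1 : (y : G)⁻¹ * z ∈ V := QuotientGroup.eq.mp hab
    refine QuotientGroup.eq.mpr ?_
    rw [Subgroup.mem_subgroupOf]
    simpa using h1

theorem exists_phiH_iff {V : Subgroup G} {hVH : V ≤ H} {x : G} :
    (∃ d, phiH V hVH d = ((x : G) : G ⧸ V)) ↔ x ∈ H := by
  constructor
  · rintro ⟨d, hd⟩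
    induction d using QuotientGroup.induction_on with
    | _ y =>
      rw [phiH_mk] at hd
      have h1 : (y : G)⁻¹ * x ∈ V := QuotientGroup.eq.mp hd
      have : x = (y : G) * ((y : G)⁻¹ * x) := by group
      rw [this]
      exact H.mul_mem y.2 (hVH h1)
  · intro hx
    exact ⟨(((⟨x, hx⟩ : ↥H)) : ↥H ⧸ V.subgroupOf H), rfl⟩

variable (BH : RatStandardBimodule ↥H)

open Classical in
def rhoFun (V : Subgroup G) (hVH : V ≤ H) (hVo : IsOpen (V : Set G))
    (hVc : IsCompact (V : Set G)) (c : G ⧸ V) : BH.B :=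
  if h : ∃ d, phiH V hVH d = c then
    BH.ι (V.subgroupOf H) (Subgroup.subgroupOf_isOpen H V hVo)
      (subgroupOf_isCompact hHopen hVc) (Finsupp.single h.choose 1)
  else 0

theorem rhoFun_phiH (V : Subgroup G) (hVH : V ≤ H) (hVo : IsOpen (V : Set G))
    (hVc : IsCompact (V : Set G)) (d : ↥H ⧸ V.subgroupOf H) :
    rhoFun hHopen BH V hVH hVo hVc (phiH V hVH d) =
      BH.ι (V.subgroupOf H) (Subgroup.subgroupOf_isOpen H V hVo)
        (subgroupOf_isCompact hHopen hVc) (Finsupp.single d 1) := by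
  have hc : ∃ d', phiH V hVH d' = phiH V hVH d := ⟨d, rfl⟩
  rw [rhoFun, dif_pos hc]
  congr 1
  rw [phiH_injective V hVH hc.choose_spec]

theorem rhoFun_mem (V : Subgroup G) (hVH : V ≤ H) (hVo : IsOpen (V : Set G))
    (hVc : IsCompact (V : Set G)) {x : G} (hx : x ∈ H) :
    rhoFun hHopen BH V hVH hVo hVc ((x : G) : G ⧸ V) =
      BH.ι (V.subgroupOf H) (Subgroup.subgroupOf_isOpen H V hVo)
        (subgroupOf_isCompact hHopen hVc)
        (Finsupp.single (((⟨x, hx⟩ : ↥H) : ↥H ⧸ V.subgroupOf H)) 1) :=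
  rhoFun_phiH hHopen BH V hVH hVo hVc (((⟨x, hx⟩ : ↥H)) : ↥H ⧸ V.subgroupOf H)

theorem rhoFun_zero (V : Subgroup G) (hVH : V ≤ H) (hVo : IsOpen (V : Set G))
    (hVc : IsCompact (V : Set G)) {x : G} (hx : x ∉ H) :
    rhoFun hHopen BH V hVH hVo hVc ((x : G) : G ⧸ V) = 0 := by
  rw [rhoFun, dif_neg]
  rw [exists_phiH_iff]
  exact hx

def rho (V : Subgroup G) (hVH : V ≤ H) (hVo : IsOpen (V : Set G))
    (hVc : IsCompact (V : Set G)) : ((G ⧸ V) →₀ ℚ) →ₗ[ℚ] BH.B :=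
  Finsupp.linearCombination ℚ (rhoFun hHopen BH V hVH hVo hVc)

theorem rho_single (V : Subgroup G) (hVH : V ≤ H) (hVo : IsOpen (V : Set G))
    (hVc : IsCompact (V : Set G)) (c : G ⧸ V) :
    rho hHopen BH V hVH hVo hVc (Finsupp.single c 1) = rhoFun hHopen BH V hVH hVo hVc c := by
  rw [rho, Finsupp.linearCombination_single, one_smul]

end Specific

end BiProof

namespace BiProof

section Specific2

variable {G : Type} [Group G] [TopologicalSpace G] [IsTopologicalGroup G]
  {H : Subgroup G} (hHopen : IsOpen (H : Set G)) (BH : RatStandardBimodule ↥H)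

theorem rho_eta {W V : Subgroup G} (hWV : W ≤ V) (hVH : V ≤ H)
    (hVo : IsOpen (V : Set G)) (hVc : IsCompact (V : Set G))
    (hWo : IsOpen (W : Set G)) (hWc : IsCompact (W : Set G)) (f : (G ⧸ V) →₀ ℚ) :
    rho hHopen BH W (hWV.trans hVH) hWo hWc (eta hWV hWo hVc f) =
      rho hHopen BH V hVH hVo hVc f := by
  have hcomp : (rho hHopen BH W (hWV.trans hVH) hWo hWc).comp (eta hWV hWo hVc) =
      rho hHopen BH V hVH hVo hVc := by
    apply qf_ext
    intro c
    induction c using QuotientGroup.induction_on with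
    | _ x =>
    rw [LinearMap.comp_apply, eta_single, tfun, map_smul, map_sum]
    simp only [rho_single]
    by_cases hx : x ∈ H
    · have hle' : W.subgroupOf H ≤ V.subgroupOf H := fun z hz =>
        Subgroup.mem_subgroupOf.mpr (hWV (Subgroup.mem_subgroupOf.mp hz))
      set d : ↥H ⧸ V.subgroupOf H := (((⟨x, hx⟩ : ↥H)) : ↥H ⧸ V.subgroupOf H) with hd
      have himg : phiH W (hWV.trans hVH) '' fib hle' d = fib hWV ((x : G) : G ⧸ V) := by
        ext w
        constructor
        · rintro ⟨e, he, rfl⟩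
          induction e using QuotientGroup.induction_on with
          | _ z =>
            have h0 : ((z : ↥H ⧸ V.subgroupOf H)) = d := (cosetProj_mk hle' z) ▸ (mem_fib.mp he)
            have h1 : (z⁻¹ * ⟨x, hx⟩ : ↥H) ∈ V.subgroupOf H :=
              QuotientGroup.eq.mp (hd ▸ h0)
            rw [Subgroup.mem_subgroupOf] at h1
            rw [mem_fib, phiH_mk, cosetProj_mk]
            exact QuotientGroup.eq.mpr (by simpa using h1)
        · intro hw
          induction w using QuotientGroup.induction_on with
          | _ z =>
            have h0 : ((z : G) : G ⧸ V) = ((x : G) : G ⧸ V) :=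
              (cosetProj_mk hWV z) ▸ (mem_fib.mp hw)
            have h1 : z⁻¹ * x ∈ V := QuotientGroup.eq.mp h0
            have hz : z ∈ H := by
              have hzx : z = x * (z⁻¹ * x)⁻¹ := by group
              rw [hzx]
              exact H.mul_mem hx (H.inv_mem (hVH h1))
            refine ⟨(((⟨z, hz⟩ : ↥H)) : ↥H ⧸ W.subgroupOf H), ?_, rfl⟩
            rw [mem_fib, cosetProj_mk, hd]
            refine QuotientGroup.eq.mpr ?_
            rw [Subgroup.mem_subgroupOf]
            simpa using h1
      have hrel : (W.subgroupOf H).relIndex (V.subgroupOf H) = W.relIndex V := by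
        rw [relindex_eq_card_fib hle' d, relindex_eq_card_fib hWV ((x : G) : G ⧸ V), ← himg,
          Nat.card_coe_set_eq, Nat.card_coe_set_eq,
          Set.ncard_image_of_injective _ (phiH_injective W (hWV.trans hVH))]
      have hBH := BH.ι_compat (V.subgroupOf H) (W.subgroupOf H) hle'
        (Subgroup.subgroupOf_isOpen H V hVo) (subgroupOf_isCompact hHopen hVc)
        (Subgroup.subgroupOf_isOpen H W hWo) (subgroupOf_isCompact hHopen hWc) (⟨x, hx⟩ : ↥H)
      have hsum : ((fib_finite hWV hWo hVc ((x : G) : G ⧸ V)).toFinset.sum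
          fun w => rhoFun hHopen BH W (hWV.trans hVH) hWo hWc w) =
          ((W.subgroupOf H).relIndex (V.subgroupOf H) : ℚ) •
            BH.ι (V.subgroupOf H) (Subgroup.subgroupOf_isOpen H V hVo)
              (subgroupOf_isCompact hHopen hVc) (Finsupp.single d 1) := by
        calc ((fib_finite hWV hWo hVc ((x : G) : G ⧸ V)).toFinset.sum
            fun w => rhoFun hHopen BH W (hWV.trans hVH) hWo hWc w)
            = ∑ᶠ w ∈ fib hWV ((x : G) : G ⧸ V), rhoFun hHopen BH W (hWV.trans hVH) hWo hWc w := by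
              rw [← finsum_mem_coe_finset, Set.Finite.coe_toFinset]
          _ = ∑ᶠ e ∈ fib hle' d,
              rhoFun hHopen BH W (hWV.trans hVH) hWo hWc (phiH W (hWV.trans hVH) e) := by
              rw [← himg, finsum_mem_image
                (Set.injOn_of_injective (phiH_injective W (hWV.trans hVH)))]
          _ = ∑ᶠ e ∈ fib hle' d, BH.ι (W.subgroupOf H) (Subgroup.subgroupOf_isOpen H W hWo)
              (subgroupOf_isCompact hHopen hWc) (Finsupp.single e 1) :=
              finsum_mem_congr rfl fun e _ => rhoFun_phiH hHopen BH W (hWV.trans hVH) hWo hWc e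
          _ = ((W.subgroupOf H).relIndex (V.subgroupOf H) : ℚ) •
              BH.ι (V.subgroupOf H) (Subgroup.subgroupOf_isOpen H V hVo)
                (subgroupOf_isCompact hHopen hVc) (Finsupp.single d 1) := by
              rw [hd]
              exact hBH.symm
      rw [hsum, hrel, smul_smul, inv_mul_cancel₀ (relindex_cast_ne_zero hWV hWo hVc), one_smul,
        hd]
      exact (rhoFun_mem hHopen BH V hVH hVo hVc hx).symm
    · have hzero : ∀ w ∈ (fib_finite hWV hWo hVc ((x : G) : G ⧸ V)).toFinset,
          rhoFun hHopen BH W (hWV.trans hVH) hWo hWc w = 0 := by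
        intro w hw
        rw [Set.Finite.mem_toFinset] at hw
        induction w using QuotientGroup.induction_on with
        | _ z =>
          have h0 : ((z : G) : G ⧸ V) = ((x : G) : G ⧸ V) :=
            (cosetProj_mk hWV z) ▸ (mem_fib.mp hw)
          have h1 : z⁻¹ * x ∈ V := QuotientGroup.eq.mp h0
          have hz : z ∉ H := by
            intro hz
            apply hx
            have hxz : x = z * (z⁻¹ * x) := by group
            rw [hxz]
            exact H.mul_mem hz (hVH h1)
          exact rhoFun_zero hHopen BH W (hWV.trans hVH) hWo hWc hz
      rw [Finset.sum_eq_zero hzero, smul_zero, rhoFun_zero hHopen BH V hVH hVo hVc hx]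
  calc rho hHopen BH W (hWV.trans hVH) hWo hWc (eta hWV hWo hVc f)
      = ((rho hHopen BH W (hWV.trans hVH) hWo hWc).comp (eta hWV hWo hVc)) f := rfl
  _ = rho hHopen BH V hVH hVo hVc f := by rw [hcomp]

end Specific2

end BiProof

namespace BiProof

section Specific3

variable {G : Type} [Group G] [TopologicalSpace G] [IsTopologicalGroup G]
  {H : Subgroup G} (hHopen : IsOpen (H : Set G)) (BH : RatStandardBimodule ↥H)

def piAux (U V : Subgroup G) (hVU : V ≤ U) (hVH : V ≤ H) (hVo : IsOpen (V : Set G))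
    (hVc : IsCompact (V : Set G)) (hUc : IsCompact (U : Set G)) :
    ((G ⧸ U) →₀ ℚ) →ₗ[ℚ] BH.B :=
  (rho hHopen BH V hVH hVo hVc).comp (eta hVU hVo hUc)

theorem piAux_shrink (U V W : Subgroup G) (hWV : W ≤ V) (hVU : V ≤ U) (hVH : V ≤ H)
    (hVo : IsOpen (V : Set G)) (hVc : IsCompact (V : Set G))
    (hWo : IsOpen (W : Set G)) (hWc : IsCompact (W : Set G))
    (hUc : IsCompact (U : Set G)) (f : (G ⧸ U) →₀ ℚ) :
    piAux hHopen BH U W (hWV.trans hVU) (hWV.trans hVH) hWo hWc hUc f =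
      piAux hHopen BH U V hVU hVH hVo hVc hUc f := by
  rw [piAux, piAux, LinearMap.comp_apply, LinearMap.comp_apply,
    ← eta_comp hWV hVU hWo hVo hVc hUc f, rho_eta hHopen BH hWV hVH hVo hVc hWo hWc]

theorem piAux_indep (U V₁ V₂ : Subgroup G) (h1U : V₁ ≤ U) (h1H : V₁ ≤ H)
    (h1o : IsOpen (V₁ : Set G)) (h1c : IsCompact (V₁ : Set G))
    (h2U : V₂ ≤ U) (h2H : V₂ ≤ H) (h2o : IsOpen (V₂ : Set G)) (h2c : IsCompact (V₂ : Set G))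
    (hUc : IsCompact (U : Set G)) (f : (G ⧸ U) →₀ ℚ) :
    piAux hHopen BH U V₁ h1U h1H h1o h1c hUc f = piAux hHopen BH U V₂ h2U h2H h2o h2c hUc f := by
  have hWo : IsOpen ((V₁ ⊓ V₂ : Subgroup G) : Set G) := inf_isOpen h1o h2o
  have hWc : IsCompact ((V₁ ⊓ V₂ : Subgroup G) : Set G) := inf_isCompact h1c h2o
  rw [← piAux_shrink hHopen BH U V₁ (V₁ ⊓ V₂) inf_le_left h1U h1H h1o h1c hWo hWc hUc f,
    ← piAux_shrink hHopen BH U V₂ (V₁ ⊓ V₂) inf_le_right h2U h2H h2o h2c hWo hWc hUc f]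

def piU (U : Subgroup G) (hUo : IsOpen (U : Set G)) (hUc : IsCompact (U : Set G)) :
    ((G ⧸ U) →₀ ℚ) →ₗ[ℚ] BH.B :=
  piAux hHopen BH U (U ⊓ H) inf_le_left inf_le_right (inf_isOpen hUo hHopen)
    (inf_isCompact hUc hHopen) hUc

theorem piU_eta (U V : Subgroup G) (hVU : V ≤ U) (hUo : IsOpen (U : Set G))
    (hUc : IsCompact (U : Set G)) (hVo : IsOpen (V : Set G)) (hVc : IsCompact (V : Set G))
    (f : (G ⧸ U) →₀ ℚ) :
    piU hHopen BH U hUo hUc f = piU hHopen BH V hVo hVc (eta hVU hVo hUc f) := by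
  have hWU : V ⊓ H ≤ U := le_trans inf_le_left hVU
  have hWo : IsOpen ((V ⊓ H : Subgroup G) : Set G) := inf_isOpen hVo hHopen
  have hWc : IsCompact ((V ⊓ H : Subgroup G) : Set G) := inf_isCompact hVc hHopen
  rw [piU, piAux_indep hHopen BH U (U ⊓ H) (V ⊓ H) inf_le_left inf_le_right
    (inf_isOpen hUo hHopen) (inf_isCompact hUc hHopen) hWU inf_le_right hWo hWc hUc f]
  rw [piAux, LinearMap.comp_apply, piU, piAux, LinearMap.comp_apply]
  congr 1
  have h1 : V ⊓ H ≤ V := inf_le_left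
  rw [← eta_comp h1 hVU hWo hVo hVc hUc f]

end Specific3

end BiProof

namespace BiProof

section Specific4

variable {G : Type} [Group G] [TopologicalSpace G] [IsTopologicalGroup G]
  {H : Subgroup G} (hHopen : IsOpen (H : Set G)) (BG : RatStandardBimodule G)

/-- `H/U' → G/U'` for `U'` a subgroup of `H`. -/
def phiG (U' : Subgroup ↥H) : ↥H ⧸ U' → G ⧸ upSub U' :=
  Quotient.map' Subtype.val fun a b hab => by
    have h1 : (a⁻¹ * b : ↥H) ∈ U' := QuotientGroup.leftRel_apply.mp hab
    refine QuotientGroup.leftRel_apply.mpr (mem_upSub.mpr ⟨a⁻¹ * b, h1, ?_⟩)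
    simp

theorem phiG_mk (U' : Subgroup ↥H) (y : ↥H) :
    phiG U' ((y : ↥H ⧸ U')) = ((y : G) : G ⧸ upSub U') := rfl

theorem phiG_injective (U' : Subgroup ↥H) : Function.Injective (phiG U') := by
  intro a b hab
  induction a using QuotientGroup.induction_on with
  | _ y =>
  induction b using QuotientGroup.induction_on with
  | _ z =>
    have h1 : (y : G)⁻¹ * z ∈ upSub U' := QuotientGroup.eq.mp hab
    obtain ⟨w, hw, hw2⟩ := mem_upSub.mp h1
    refine QuotientGroup.eq.mpr ?_
    have : y⁻¹ * z = w := by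
      apply Subtype.ext
      rw [hw2]
      simp
    rw [this]
    exact hw

def sigma (U' : Subgroup ↥H) (hU'o : IsOpen (U' : Set ↥H)) (hU'c : IsCompact (U' : Set ↥H)) :
    ((↥H ⧸ U') →₀ ℚ) →ₗ[ℚ] BG.B :=
  Finsupp.linearCombination ℚ fun d =>
    BG.ι (upSub U') (upSub_isOpen hHopen hU'o) (upSub_isCompact hU'c)
      (Finsupp.single (phiG U' d) 1)

theorem sigma_single (U' : Subgroup ↥H) (hU'o : IsOpen (U' : Set ↥H))
    (hU'c : IsCompact (U' : Set ↥H)) (d : ↥H ⧸ U') :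
    sigma hHopen BG U' hU'o hU'c (Finsupp.single d 1) =
      BG.ι (upSub U') (upSub_isOpen hHopen hU'o) (upSub_isCompact hU'c)
        (Finsupp.single (phiG U' d) 1) := by
  rw [sigma, Finsupp.linearCombination_single, one_smul]

theorem fib_upSub {V' U' : Subgroup ↥H} (h : V' ≤ U') (y : ↥H) :
    phiG V' '' fib h ((y : ↥H ⧸ U')) =
      fib (upSub_mono h) (((y : G) : G ⧸ upSub U')) := by
  ext w
  constructor
  · rintro ⟨e, he, rfl⟩
    induction e using QuotientGroup.induction_on with
    | _ z =>
      have h0 : ((z : ↥H ⧸ U')) = ((y : ↥H ⧸ U')) := (cosetProj_mk h z) ▸ (mem_fib.mp he)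
      have h1 : z⁻¹ * y ∈ U' := QuotientGroup.eq.mp h0
      rw [mem_fib, phiG_mk, cosetProj_mk]
      refine QuotientGroup.eq.mpr (mem_upSub.mpr ⟨z⁻¹ * y, h1, ?_⟩)
      simp
  · intro hw
    induction w using QuotientGroup.induction_on with
    | _ t =>
      have h0 : ((t : G) : G ⧸ upSub U') = (((y : G) : G) : G ⧸ upSub U') :=
        (cosetProj_mk (upSub_mono h) t) ▸ (mem_fib.mp hw)
      have h1 : t⁻¹ * (y : G) ∈ upSub U' := QuotientGroup.eq.mp h0
      have ht : t ∈ H := by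
        have hth : t = (y : G) * (t⁻¹ * (y : G))⁻¹ := by group
        rw [hth]
        exact H.mul_mem y.2 (H.inv_mem (upSub_le U' h1))
      obtain ⟨w0, hw0, hw02⟩ := mem_upSub.mp h1
      refine ⟨(((⟨t, ht⟩ : ↥H)) : ↥H ⧸ V'), ?_, rfl⟩
      rw [mem_fib, cosetProj_mk]
      refine QuotientGroup.eq.mpr ?_
      have : (⟨t, ht⟩ : ↥H)⁻¹ * y = w0 := by
        apply Subtype.ext
        rw [hw02]
        simp
      rw [this]
      exact hw0

theorem relindex_upSub {V' U' : Subgroup ↥H} (h : V' ≤ U') :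
    (upSub V').relIndex (upSub U') = V'.relIndex U' := by
  rw [relindex_eq_card_fib (upSub_mono h) (((1 : ↥H) : G) : G ⧸ upSub U'),
    ← fib_upSub h (1 : ↥H), relindex_eq_card_fib h ((1 : ↥H) : ↥H ⧸ U'),
    Nat.card_coe_set_eq, Nat.card_coe_set_eq,
    Set.ncard_image_of_injective _ (phiG_injective V')]

theorem sigma_eta (U' V' : Subgroup ↥H) (hV'U' : V' ≤ U') (hU'o : IsOpen (U' : Set ↥H))
    (hU'c : IsCompact (U' : Set ↥H)) (hV'o : IsOpen (V' : Set ↥H))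
    (hV'c : IsCompact (V' : Set ↥H)) (f : (↥H ⧸ U') →₀ ℚ) :
    sigma hHopen BG U' hU'o hU'c f =
      sigma hHopen BG V' hV'o hV'c (eta hV'U' hV'o hU'c f) := by
  have hcomp : sigma hHopen BG U' hU'o hU'c =
      (sigma hHopen BG V' hV'o hV'c).comp (eta hV'U' hV'o hU'c) := by
    apply qf_ext
    intro d
    induction d using QuotientGroup.induction_on with
    | _ y =>
    rw [LinearMap.comp_apply, eta_single, tfun, map_smul, map_sum]
    simp only [sigma_single]
    have hBG := BG.ι_compat (upSub U') (upSub V') (upSub_mono hV'U')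
      (upSub_isOpen hHopen hU'o) (upSub_isCompact hU'c)
      (upSub_isOpen hHopen hV'o) (upSub_isCompact hV'c) ((y : G))
    have hsum : ((fib_finite hV'U' hV'o hU'c ((y : ↥H ⧸ U'))).toFinset.sum
        fun e => BG.ι (upSub V') (upSub_isOpen hHopen hV'o) (upSub_isCompact hV'c)
          (Finsupp.single (phiG V' e) 1)) =
        ((upSub V').relIndex (upSub U') : ℚ) •
          BG.ι (upSub U') (upSub_isOpen hHopen hU'o) (upSub_isCompact hU'c)
            (Finsupp.single (((y : G) : G ⧸ upSub U')) 1) := by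
      calc ((fib_finite hV'U' hV'o hU'c ((y : ↥H ⧸ U'))).toFinset.sum
          fun e => BG.ι (upSub V') (upSub_isOpen hHopen hV'o) (upSub_isCompact hV'c)
            (Finsupp.single (phiG V' e) 1))
          = ∑ᶠ e ∈ fib hV'U' ((y : ↥H ⧸ U')),
            BG.ι (upSub V') (upSub_isOpen hHopen hV'o) (upSub_isCompact hV'c)
              (Finsupp.single (phiG V' e) 1) := by
            rw [← finsum_mem_coe_finset, Set.Finite.coe_toFinset]
        _ = ∑ᶠ w ∈ phiG V' '' fib hV'U' ((y : ↥H ⧸ U')),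
            BG.ι (upSub V') (upSub_isOpen hHopen hV'o) (upSub_isCompact hV'c)
              (Finsupp.single w 1) := by
            rw [finsum_mem_image (Set.injOn_of_injective (phiG_injective V'))]
        _ = ((upSub V').relIndex (upSub U') : ℚ) •
            BG.ι (upSub U') (upSub_isOpen hHopen hU'o) (upSub_isCompact hU'c)
              (Finsupp.single (((y : G) : G ⧸ upSub U')) 1) := by
            rw [fib_upSub hV'U' y]
            exact hBG.symm
    rw [hsum, relindex_upSub hV'U', smul_smul,
      inv_mul_cancel₀ (relindex_cast_ne_zero hV'U' hV'o hU'c), one_smul, phiG_mk]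
  calc sigma hHopen BG U' hU'o hU'c f
      = ((sigma hHopen BG V' hV'o hV'c).comp (eta hV'U' hV'o hU'c)) f := by rw [← hcomp]
  _ = sigma hHopen BG V' hV'o hV'c (eta hV'U' hV'o hU'c f) := rfl

end Specific4

end BiProof

namespace BiProof

section Specific5

variable {G : Type} [Group G] [TopologicalSpace G] [IsTopologicalGroup G]
  {H : Subgroup G} (hHopen : IsOpen (H : Set G)) (BH : RatStandardBimodule ↥H)

theorem conjS_le_H {V : Subgroup G} (hVH : V ≤ H) (g : ↥H) : conjS ((g : G)) V ≤ H := by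
  intro z hz
  rw [mem_conjS] at hz
  have hzz : z = (g : G)⁻¹ * ((g : G) * z * (g : G)⁻¹) * (g : G) := by group
  rw [hzz]
  exact H.mul_mem (H.mul_mem (H.inv_mem g.2) (hVH hz)) g.2

theorem subgroupOf_conjS {V : Subgroup G} (g : ↥H) :
    (conjS ((g : G)) V).subgroupOf H = conjS g (V.subgroupOf H) := by
  ext z
  rw [Subgroup.mem_subgroupOf, mem_conjS, mem_conjS, Subgroup.mem_subgroupOf]
  simp

theorem upSub_conjS (U' : Subgroup ↥H) (g : ↥H) :
    upSub (conjS g U') = conjS ((g : G)) (upSub U') := by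
  ext x
  rw [mem_upSub, mem_conjS, mem_upSub]
  constructor
  · rintro ⟨z, hz, rfl⟩
    rw [mem_conjS] at hz
    exact ⟨g * z * g⁻¹, hz, by simp⟩
  · rintro ⟨w, hw, hw2⟩
    refine ⟨g⁻¹ * w * g, ?_, ?_⟩
    · rw [mem_conjS]
      have hgw : g * (g⁻¹ * w * g) * g⁻¹ = w := by group
      rw [hgw]
      exact hw
    · show ((g⁻¹ * w * g : ↥H) : G) = x
      push_cast
      rw [hw2]
      group

theorem piU_single_upSub (U' : Subgroup ↥H) (hU'o : IsOpen (U' : Set ↥H))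
    (hU'c : IsCompact (U' : Set ↥H)) (y : ↥H) :
    piU hHopen BH (upSub U') (upSub_isOpen hHopen hU'o) (upSub_isCompact hU'c)
      (Finsupp.single (((y : G)) : G ⧸ upSub U') 1) =
      BH.ι U' hU'o hU'c (Finsupp.single ((y : ↥H ⧸ U')) 1) := by
  rw [piU, piAux_indep hHopen BH (upSub U') (upSub U' ⊓ H) (upSub U') inf_le_left inf_le_right
    (inf_isOpen (upSub_isOpen hHopen hU'o) hHopen)
    (inf_isCompact (upSub_isCompact hU'c) hHopen) (le_refl _) (upSub_le U')
    (upSub_isOpen hHopen hU'o) (upSub_isCompact hU'c) (upSub_isCompact hU'c) _]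
  rw [piAux, LinearMap.comp_apply, eta_self, rho_single]
  rw [rhoFun_mem hHopen BH (upSub U') (upSub_le U') (upSub_isOpen hHopen hU'o)
    (upSub_isCompact hU'c) (y.2 : (y : G) ∈ H)]
  have hAB : (upSub U').subgroupOf H = U' :=
    Subgroup.comap_map_eq_self_of_injective (Subgroup.subtype_injective H) U'
  exact iota_congr BH hAB _ _ hU'o hU'c y

theorem rho_lmap (V : Subgroup G) (hVH : V ≤ H) (hVo : IsOpen (V : Set G))
    (hVc : IsCompact (V : Set G)) (g : ↥H) (f : (G ⧸ V) →₀ ℚ) :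
    rho hHopen BH V hVH hVo hVc (lmap ((g : G)) V f) =
      BH.l g (rho hHopen BH V hVH hVo hVc f) := by
  have hcomp : (rho hHopen BH V hVH hVo hVc).comp (lmap ((g : G)) V) =
      (BH.l g).comp (rho hHopen BH V hVH hVo hVc) := by
    apply qf_ext
    intro c
    induction c using QuotientGroup.induction_on with
    | _ x =>
    rw [LinearMap.comp_apply, LinearMap.comp_apply, lmap_single, rho_single, rho_single]
    have hsm : ((g : G)) • ((x : G) : G ⧸ V) = (((g : G) * x : G) : G ⧸ V) := rfl
    rw [hsm]
    by_cases hx : x ∈ H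
    · have hgx : (g : G) * x ∈ H := H.mul_mem g.2 hx
      rw [rhoFun_mem hHopen BH V hVH hVo hVc hgx, rhoFun_mem hHopen BH V hVH hVo hVc hx,
        ← iota_lmap BH (Subgroup.subgroupOf_isOpen H V hVo) (subgroupOf_isCompact hHopen hVc) g,
        lmap_single]
      rfl
    · have hgx : (g : G) * x ∉ H := by
        intro hgx
        apply hx
        have hxx : x = ((g : G))⁻¹ * ((g : G) * x) := by group
        rw [hxx]
        exact H.mul_mem (H.inv_mem g.2) hgx
      rw [rhoFun_zero hHopen BH V hVH hVo hVc hgx, rhoFun_zero hHopen BH V hVH hVo hVc hx,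
        map_zero]
  exact LinearMap.congr_fun hcomp f

theorem rho_rmap (V : Subgroup G) (hVH : V ≤ H) (hVo : IsOpen (V : Set G))
    (hVc : IsCompact (V : Set G)) (g : ↥H) (f : (G ⧸ V) →₀ ℚ) :
    rho hHopen BH (conjS ((g : G)) V) (conjS_le_H hVH g) (conjS_isOpen hVo)
      (conjS_isCompact hVc) (rmap ((g : G)) V f) =
      BH.r g (rho hHopen BH V hVH hVo hVc f) := by
  have hcomp : (rho hHopen BH (conjS ((g : G)) V) (conjS_le_H hVH g) (conjS_isOpen hVo)
      (conjS_isCompact hVc)).comp (rmap ((g : G)) V) =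
      (BH.r g).comp (rho hHopen BH V hVH hVo hVc) := by
    apply qf_ext
    intro c
    induction c using QuotientGroup.induction_on with
    | _ x =>
    rw [LinearMap.comp_apply, LinearMap.comp_apply, rmap_single, rtrans_mk, rho_single,
      rho_single]
    by_cases hx : x ∈ H
    · have hxg : x * (g : G) ∈ H := H.mul_mem hx g.2
      rw [rhoFun_mem hHopen BH _ (conjS_le_H hVH g) (conjS_isOpen hVo) (conjS_isCompact hVc)
        hxg, rhoFun_mem hHopen BH V hVH hVo hVc hx,
        iota_rmap BH (Subgroup.subgroupOf_isOpen H V hVo) (subgroupOf_isCompact hHopen hVc) g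
          (conjS_isOpen (Subgroup.subgroupOf_isOpen H V hVo))
          (conjS_isCompact (subgroupOf_isCompact hHopen hVc)), rmap_single, rtrans_mk]
      exact iota_congr BH (subgroupOf_conjS g) _ _ _ _ ((⟨x, hx⟩ : ↥H) * g)
    · have hxg : x * (g : G) ∉ H := by
        intro hxg
        apply hx
        have hxx : x = (x * (g : G)) * ((g : G))⁻¹ := by group
        rw [hxx]
        exact H.mul_mem hxg (H.inv_mem g.2)
      rw [rhoFun_zero hHopen BH _ (conjS_le_H hVH g) (conjS_isOpen hVo) (conjS_isCompact hVc)
        hxg, rhoFun_zero hHopen BH V hVH hVo hVc hx, map_zero]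
  exact LinearMap.congr_fun hcomp f

theorem piU_lmap (U : Subgroup G) (hUo : IsOpen (U : Set G)) (hUc : IsCompact (U : Set G))
    (g : ↥H) (f : (G ⧸ U) →₀ ℚ) :
    piU hHopen BH U hUo hUc (lmap ((g : G)) U f) = BH.l g (piU hHopen BH U hUo hUc f) := by
  rw [piU, piAux, LinearMap.comp_apply, LinearMap.comp_apply,
    eta_lmap inf_le_left (inf_isOpen hUo hHopen) hUc ((g : G)) f,
    rho_lmap hHopen BH (U ⊓ H) inf_le_right (inf_isOpen hUo hHopen)
      (inf_isCompact hUc hHopen) g]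

theorem piU_rmap (U : Subgroup G) (hUo : IsOpen (U : Set G)) (hUc : IsCompact (U : Set G))
    (g : ↥H) (f : (G ⧸ U) →₀ ℚ) :
    piU hHopen BH (conjS ((g : G)) U) (conjS_isOpen hUo) (conjS_isCompact hUc)
      (rmap ((g : G)) U f) = BH.r g (piU hHopen BH U hUo hUc f) := by
  rw [piU, piAux_indep hHopen BH (conjS ((g : G)) U) (conjS ((g : G)) U ⊓ H)
    (conjS ((g : G)) (U ⊓ H)) inf_le_left inf_le_right
    (inf_isOpen (conjS_isOpen hUo) hHopen) (inf_isCompact (conjS_isCompact hUc) hHopen)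
    (conjS_le ((g : G)) inf_le_left) (conjS_le_H inf_le_right g)
    (conjS_isOpen (inf_isOpen hUo hHopen)) (conjS_isCompact (inf_isCompact hUc hHopen))
    (conjS_isCompact hUc) _]
  rw [piAux, LinearMap.comp_apply,
    eta_rmap inf_le_left (inf_isOpen hUo hHopen) hUc ((g : G))
      (conjS_isOpen (inf_isOpen hUo hHopen)) (conjS_isCompact hUc) f,
    rho_rmap hHopen BH (U ⊓ H) inf_le_right (inf_isOpen hUo hHopen)
      (inf_isCompact hUc hHopen) g]
  rfl

end Specific5

end BiProof

namespace BiProof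

section Specific6

variable {G : Type} [Group G] [TopologicalSpace G] [IsTopologicalGroup G]
  {H : Subgroup G} (hHopen : IsOpen (H : Set G)) (BG : RatStandardBimodule G)

theorem sigma_lmap (U' : Subgroup ↥H) (hU'o : IsOpen (U' : Set ↥H))
    (hU'c : IsCompact (U' : Set ↥H)) (g : ↥H) (f : (↥H ⧸ U') →₀ ℚ) :
    sigma hHopen BG U' hU'o hU'c (lmap g U' f) =
      BG.l ((g : G)) (sigma hHopen BG U' hU'o hU'c f) := by
  have hcomp : (sigma hHopen BG U' hU'o hU'c).comp (lmap g U') =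
      (BG.l ((g : G))).comp (sigma hHopen BG U' hU'o hU'c) := by
    apply qf_ext
    intro d
    induction d using QuotientGroup.induction_on with
    | _ y =>
    rw [LinearMap.comp_apply, LinearMap.comp_apply, lmap_single, sigma_single, sigma_single,
      ← iota_lmap BG (upSub_isOpen hHopen hU'o) (upSub_isCompact hU'c) ((g : G)), lmap_single]
    rfl
  exact LinearMap.congr_fun hcomp f

theorem sigma_rmap (U' : Subgroup ↥H) (hU'o : IsOpen (U' : Set ↥H))
    (hU'c : IsCompact (U' : Set ↥H)) (g : ↥H) (f : (↥H ⧸ U') →₀ ℚ) :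
    sigma hHopen BG (conjS g U') (conjS_isOpen hU'o) (conjS_isCompact hU'c) (rmap g U' f) =
      BG.r ((g : G)) (sigma hHopen BG U' hU'o hU'c f) := by
  have hcomp : (sigma hHopen BG (conjS g U') (conjS_isOpen hU'o)
      (conjS_isCompact hU'c)).comp (rmap g U') =
      (BG.r ((g : G))).comp (sigma hHopen BG U' hU'o hU'c) := by
    apply qf_ext
    intro d
    induction d using QuotientGroup.induction_on with
    | _ y =>
    rw [LinearMap.comp_apply, LinearMap.comp_apply, rmap_single, rtrans_mk, sigma_single,
      sigma_single,
      iota_rmap BG (upSub_isOpen hHopen hU'o) (upSub_isCompact hU'c) ((g : G))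
        (conjS_isOpen (upSub_isOpen hHopen hU'o)) (conjS_isCompact (upSub_isCompact hU'c)),
      rmap_single, phiG_mk U' y, rtrans_mk, phiG_mk (conjS g U') (y * g)]
    exact iota_congr BG (upSub_conjS U' g) _ _ _ _ ((y : G) * (g : G))
  exact LinearMap.congr_fun hcomp f

end Specific6

end BiProof


open BiProof


/-- Let `G` be a t.d.l.c. group and `H` an open subgroup of `G`.  Then, as
`ℚ[H]`-bimodules, the rational discrete standard bimodule `Bi(H)` is isomorphic to a direct
summand of `Bi(G)`: there are `ℚ`-linear maps `i : Bi(H) → Bi(G)` and `p : Bi(G) → Bi(H)`,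
each equivariant for the left and right `H`-actions, with `p ∘ i = id`. -/
theorem biStandard_open_subgroup_summand (G : Type) [Group G] [TopologicalSpace G] [IsTopologicalGroup G] [LocallyCompactSpace G] [TotallyDisconnectedSpace G] [T2Space G]
    (H : Subgroup G) (hHopen : IsOpen (H : Set G))
    (BG : RatStandardBimodule G) (BH : RatStandardBimodule (↥H)) :
    ∃ (i : BH.B →ₗ[ℚ] BG.B) (p : BG.B →ₗ[ℚ] BH.B),
      (∀ b, p (i b) = b) ∧
      (∀ (h : ↥H) (b : BH.B), i (BH.l h b) = BG.l (h : G) (i b)) ∧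
      (∀ (h : ↥H) (b : BH.B), i (BH.r h b) = BG.r (h : G) (i b)) ∧
      (∀ (h : ↥H) (b : BG.B), p (BG.l (h : G) b) = BH.l h (p b)) ∧
      (∀ (h : ↥H) (b : BG.B), p (BG.r (h : G) b) = BH.r h (p b)) := by
  obtain ⟨p, hp⟩ := exists_extend BG (fun U hUo hUc => piU hHopen BH U hUo hUc)
    (fun U V hVU hU hU' hV hV' f => piU_eta hHopen BH U V hVU hU hU' hV hV' f)
  obtain ⟨i, hi⟩ := exists_extend BH (fun U' hU'o hU'c => sigma hHopen BG U' hU'o hU'c)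
    (fun U' V' hV'U' hU hU' hV hV' f => sigma_eta hHopen BG U' V' hV'U' hU hU' hV hV' f)
  refine ⟨i, p, ?_, ?_, ?_, ?_, ?_⟩
  · intro b
    obtain ⟨U', hU'o, hU'c, f, rfl⟩ := BH.ι_jointly_surjective b
    rw [hi]
    have hps : p.comp (sigma hHopen BG U' hU'o hU'c) = BH.ι U' hU'o hU'c := by
      apply qf_ext
      intro d
      induction d using QuotientGroup.induction_on with
      | _ y =>
      rw [LinearMap.comp_apply, sigma_single, hp, phiG_mk]
      exact piU_single_upSub hHopen BH U' hU'o hU'c y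
    exact LinearMap.congr_fun hps f
  · intro h b
    obtain ⟨U', hU'o, hU'c, f, rfl⟩ := BH.ι_jointly_surjective b
    rw [hi, ← iota_lmap BH hU'o hU'c h f, hi, sigma_lmap hHopen BG U' hU'o hU'c h f]
  · intro h b
    obtain ⟨U', hU'o, hU'c, f, rfl⟩ := BH.ι_jointly_surjective b
    rw [hi, iota_rmap BH hU'o hU'c h (conjS_isOpen hU'o) (conjS_isCompact hU'c) f, hi,
      sigma_rmap hHopen BG U' hU'o hU'c h f]
  · intro h b
    obtain ⟨U, hUo, hUc, f, rfl⟩ := BG.ι_jointly_surjective b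
    rw [hp, ← iota_lmap BG hUo hUc ((h : G)) f, hp, piU_lmap hHopen BH U hUo hUc h f]
  · intro h b
    obtain ⟨U, hUo, hUc, f, rfl⟩ := BG.ι_jointly_surjective b
    rw [hp, iota_rmap BG hUo hUc ((h : G)) (conjS_isOpen hUo) (conjS_isCompact hUc) f, hp,
      piU_rmap hHopen BH U hUo hUc h f]
end
end

section
/- Let G be a t.d.l.c. group and N a closed normal subgroup of G. Then there is an isomorphism Q ⊗_N Bi(G) ≅ Bi(G/N) of Q[G/N]-bimodules, where Q ⊗_N − denotes the N-coinvariants. -/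
noncomputable section

open scoped Pointwise

namespace BiAux

variable {X : Type} [Group X] [TopologicalSpace X] [IsTopologicalGroup X]

/-- The fiber of `cosetProj` over a coset. -/
def fib (V U : Subgroup X) (hVU : V ≤ U) (c : X ⧸ U) : Set (X ⧸ V) :=
  {w : X ⧸ V | cosetProj hVU w = c}

lemma cosetProj_mk {V U : Subgroup X} (hVU : V ≤ U) (z : X) :
    cosetProj hVU (z : X ⧸ V) = (z : X ⧸ U) := rfl

/-- The image of a left coset `z • K` in `X ⧸ V`. -/
def cosetImg (V : Subgroup X) (z : X) (K : Subgroup X) : Set (X ⧸ V) :=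
  (fun g : X => (g : X ⧸ V)) '' (z • (K : Set X))

lemma mem_cosetImg {V : Subgroup X} {z : X} {K : Subgroup X} (w : X ⧸ V) :
    w ∈ cosetImg V z K ↔ ∃ g : X, z⁻¹ * g ∈ K ∧ (g : X ⧸ V) = w := by
  constructor
  · rintro ⟨g, hg, rfl⟩
    exact ⟨g, (mem_leftCoset_iff z).mp hg, rfl⟩
  · rintro ⟨g, hg, rfl⟩
    exact ⟨g, (mem_leftCoset_iff z).mpr hg, rfl⟩

lemma fib_eq_cosetImg (V U : Subgroup X) (hVU : V ≤ U) (x : X) :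
    fib V U hVU (x : X ⧸ U) = cosetImg V x U := by
  ext w
  induction w using QuotientGroup.induction_on with
  | H z =>
    simp only [fib, Set.mem_setOf_eq, cosetProj_mk, mem_cosetImg]
    constructor
    · intro h
      refine ⟨z, ?_, rfl⟩
      exact QuotientGroup.eq.mp h.symm
    · rintro ⟨g, hg, hgz⟩
      have h1 : (g : X ⧸ U) = (z : X ⧸ U) := by
        exact congrArg (cosetProj hVU) hgz
      rw [← h1]
      exact (QuotientGroup.eq.mpr hg).symm

lemma exists_bij_cosetImg (V K : Subgroup X) (hVK : V ≤ K) (z : X) :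
    ∃ F : K ⧸ V.subgroupOf K → cosetImg V z K, Function.Bijective F := by
  refine ⟨fun q => Quotient.liftOn' q
      (fun k => ⟨((z * (k : X) : X) : X ⧸ V), ⟨z * (k : X), by
        exact (mem_leftCoset_iff z).mpr (by simpa using k.2), rfl⟩⟩)
      (fun k k' hkk' => ?_), ?_, ?_⟩
  · have h : ((k : X)⁻¹ * (k' : X)) ∈ V := by
      have := QuotientGroup.leftRel_apply.mp hkk'
      simpa [Subgroup.mem_subgroupOf] using this
    exact Subtype.ext (QuotientGroup.eq.mpr (by simpa [mul_assoc] using h))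
  · intro q q'
    induction q using Quotient.inductionOn' with
    | h k =>
      induction q' using Quotient.inductionOn' with
      | h k' =>
        intro hqq'
        have h : ((z * (k : X) : X) : X ⧸ V) = ((z * (k' : X) : X) : X ⧸ V) :=
          congrArg Subtype.val hqq'
        have h2 : (k : X)⁻¹ * (k' : X) ∈ V := by
          have := QuotientGroup.eq.mp h
          simpa [mul_assoc] using this
        exact Quotient.sound' (QuotientGroup.leftRel_apply.mpr
          (by simpa [Subgroup.mem_subgroupOf] using h2))
  · rintro ⟨w, hw⟩
    rw [mem_cosetImg] at hw
    obtain ⟨g, hg, rfl⟩ := hw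
    refine ⟨Quotient.mk'' ⟨z⁻¹ * g, hg⟩, ?_⟩
    exact Subtype.ext (by simp)

lemma cosetImg_ncard (V K : Subgroup X) (hVK : V ≤ K) (z : X) :
    Nat.card (cosetImg V z K) = V.relIndex K := by
  obtain ⟨F, hF⟩ := exists_bij_cosetImg V K hVK z
  rw [Subgroup.relIndex, Subgroup.index]
  exact (Nat.card_eq_of_bijective F hF).symm

lemma quot_finite (V K : Subgroup X) (hV : IsOpen (V : Set X)) (hK' : IsCompact (K : Set X)) :
    Finite (K ⧸ V.subgroupOf K) := by
  haveI : CompactSpace K := isCompact_iff_compactSpace.mp hK'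
  exact Subgroup.quotient_finite_of_isOpen _ (Subgroup.subgroupOf_isOpen K V hV)

lemma cosetImg_finite (V K : Subgroup X) (hVK : V ≤ K) (hV : IsOpen (V : Set X))
    (hK' : IsCompact (K : Set X)) (z : X) : (cosetImg V z K).Finite := by
  obtain ⟨F, hF⟩ := exists_bij_cosetImg V K hVK z
  haveI := quot_finite V K hV hK'
  haveI : Finite (cosetImg V z K) := Finite.of_surjective F hF.surjective
  exact Set.toFinite _

lemma fib_finite (V U : Subgroup X) (hVU : V ≤ U) (hV : IsOpen (V : Set X))
    (hU' : IsCompact (U : Set X)) (c : X ⧸ U) : (fib V U hVU c).Finite := by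
  induction c using QuotientGroup.induction_on with
  | H x => exact (fib_eq_cosetImg V U hVU x) ▸ cosetImg_finite V U hVU hV hU' x

lemma relIndex_ne_zero (V K : Subgroup X) (hV : IsOpen (V : Set X))
    (hK' : IsCompact (K : Set X)) : V.relIndex K ≠ 0 := by
  haveI := quot_finite V K hV hK'
  rw [Subgroup.relIndex, Subgroup.index]
  exact Nat.card_ne_zero.mpr ⟨inferInstance, inferInstance⟩

end BiAux
namespace BiAux

variable {X : Type} [Group X] [TopologicalSpace X] [IsTopologicalGroup X]

/-- The transition map `η_{U,V} : ℚ[X/U] → ℚ[X/V]`. -/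
noncomputable def trans (V U : Subgroup X) (hVU : V ≤ U)
    (hfin : ∀ c : X ⧸ U, (fib V U hVU c).Finite) : ((X ⧸ U) →₀ ℚ) →ₗ[ℚ] ((X ⧸ V) →₀ ℚ) :=
  Finsupp.lsum ℚ (fun c => LinearMap.toSpanSingleton ℚ _
    ((V.relIndex U : ℚ)⁻¹ • ∑ w ∈ (hfin c).toFinset, Finsupp.single w 1))

lemma trans_single (V U : Subgroup X) (hVU : V ≤ U)
    (hfin : ∀ c : X ⧸ U, (fib V U hVU c).Finite) (c : X ⧸ U) :
    trans V U hVU hfin (Finsupp.single c 1) =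
      (V.relIndex U : ℚ)⁻¹ • ∑ w ∈ (hfin c).toFinset, Finsupp.single w 1 := by
  rw [trans, Finsupp.lsum_single, LinearMap.toSpanSingleton_apply, one_smul]

lemma ι_trans (BB : RatStandardBimodule X) (V U : Subgroup X) (hVU : V ≤ U)
    (hU : IsOpen (U : Set X)) (hU' : IsCompact (U : Set X))
    (hV : IsOpen (V : Set X)) (hV' : IsCompact (V : Set X))
    (hfin : ∀ c : X ⧸ U, (fib V U hVU c).Finite) (f : (X ⧸ U) →₀ ℚ) :
    BB.ι V hV hV' (trans V U hVU hfin f) = BB.ι U hU hU' f := by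
  have key : ((BB.ι V hV hV').comp (trans V U hVU hfin)) = BB.ι U hU hU' := by
    apply Finsupp.lhom_ext'
    intro c
    apply LinearMap.ext_ring
    induction c using QuotientGroup.induction_on with
    | H x =>
      simp only [LinearMap.comp_apply, Finsupp.lsingle_apply, trans_single]
      rw [map_smul, map_sum]
      have hcompat := BB.ι_compat U V hVU hU hU' hV hV' x
      have hfs : ∑ᶠ w ∈ {w : X ⧸ V | cosetProj hVU w = ((x : X) : X ⧸ U)},
          BB.ι V hV hV' (Finsupp.single w 1) =
          ∑ w ∈ (hfin ((x : X) : X ⧸ U)).toFinset, BB.ι V hV hV' (Finsupp.single w 1) := by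
        exact finsum_mem_eq_finite_toFinset_sum _ (hfin ((x : X) : X ⧸ U))
      rw [← hfs, ← hcompat, smul_smul, inv_mul_cancel₀, one_smul]
      exact_mod_cast relIndex_ne_zero V U hV hU'
  exact LinearMap.congr_fun key f

end BiAux
namespace BiAux

variable {G : Type} [Group G] [TopologicalSpace G] [IsTopologicalGroup G]
variable (N : Subgroup G) [N.Normal]

/-- The image subgroup in the quotient group. -/
def pbar (U : Subgroup G) : Subgroup (G ⧸ N) := U.map (QuotientGroup.mk' N)

lemma pbar_mono {V U : Subgroup G} (h : V ≤ U) : pbar N V ≤ pbar N U := Subgroup.map_mono h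

omit [IsTopologicalGroup G] in
lemma pbar_coe (U : Subgroup G) :
    ((pbar N U) : Set (G ⧸ N)) = (QuotientGroup.mk : G → G ⧸ N) '' U := by
  rw [pbar, Subgroup.coe_map]; rfl

lemma pbar_isOpen (U : Subgroup G) (hU : IsOpen (U : Set G)) :
    IsOpen ((pbar N U) : Set (G ⧸ N)) := by
  rw [pbar_coe]; exact QuotientGroup.isOpenMap_coe _ hU

omit [IsTopologicalGroup G] in
lemma pbar_isCompact (U : Subgroup G) (hU' : IsCompact (U : Set G)) :
    IsCompact ((pbar N U) : Set (G ⧸ N)) := by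
  rw [pbar_coe]; exact hU'.image QuotientGroup.continuous_mk

/-- The induced map of coset spaces `G ⧸ U → (G ⧸ N) ⧸ Ū`. -/
def pm (U : Subgroup G) : G ⧸ U → (G ⧸ N) ⧸ (pbar N U) :=
  Quotient.map' (QuotientGroup.mk) (fun a b hab => QuotientGroup.leftRel_apply.mpr (by
    have h := QuotientGroup.leftRel_apply.mp hab
    exact Subgroup.mem_map.mpr ⟨a⁻¹ * b, h, by simp⟩))

lemma pm_mk (U : Subgroup G) (z : G) :
    pm N U ((z : G ⧸ U)) = (((z : G ⧸ N)) : (G ⧸ N) ⧸ pbar N U) := rfl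

lemma pm_surjective (U : Subgroup G) : Function.Surjective (pm N U) := by
  intro w
  induction w using QuotientGroup.induction_on with
  | H q =>
    induction q using QuotientGroup.induction_on with
    | H y => exact ⟨(y : G ⧸ U), rfl⟩

lemma pm_cosetProj {V U : Subgroup G} (hVU : V ≤ U) (w : G ⧸ V) :
    cosetProj (pbar_mono N hVU) (pm N V w) = pm N U (cosetProj hVU w) := by
  induction w using QuotientGroup.induction_on with
  | H z => rfl

lemma pm_smul (U : Subgroup G) (g : G) (w : G ⧸ U) :
    pm N U (g • w) = ((g : G ⧸ N)) • pm N U w := by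
  induction w using QuotientGroup.induction_on with
  | H z =>
    rw [MulAction.Quotient.smul_mk, smul_eq_mul, pm_mk, pm_mk,
      MulAction.Quotient.smul_mk, smul_eq_mul, QuotientGroup.mk_mul]

lemma pm_fib {U : Subgroup G} {w w' : G ⧸ U} (h : pm N U w = pm N U w') :
    ∃ ν : G, ν ∈ N ∧ w' = ν • w := by
  induction w using QuotientGroup.induction_on with
  | H y =>
    induction w' using QuotientGroup.induction_on with
    | H z =>
      rw [pm_mk, pm_mk] at h
      obtain ⟨u, hu, huval⟩ := Subgroup.mem_map.mp (QuotientGroup.eq.mp h)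
      have huval' : ((u : G) : G ⧸ N) = ((y : G) : G ⧸ N)⁻¹ * ((z : G) : G ⧸ N) := huval
      have h2 : ((y * u : G) : G ⧸ N) = ((z : G) : G ⧸ N) := by
        rw [QuotientGroup.mk_mul, huval']
        group
      have hn : (y * u)⁻¹ * z ∈ N := QuotientGroup.eq.mp h2
      refine ⟨y * ((u * ((y * u)⁻¹ * z) * u⁻¹)) * y⁻¹, ?_, ?_⟩
      · exact Subgroup.Normal.conj_mem ‹N.Normal› _
          (Subgroup.Normal.conj_mem ‹N.Normal› _ hn u) y
      · rw [MulAction.Quotient.smul_mk, smul_eq_mul]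
        apply QuotientGroup.eq.mpr
        have : z⁻¹ * (y * (u * ((y * u)⁻¹ * z) * u⁻¹) * y⁻¹ * y) = u⁻¹ := by group
        rw [this]
        exact U.inv_mem hu

lemma filter_descr (V U : Subgroup G) (hVU : V ≤ U) (x : G) (w' : (G ⧸ N) ⧸ pbar N V)
    (hw' : cosetProj (pbar_mono N hVU) w' = pm N U ((x : G ⧸ U))) :
    ∃ z₀ : G, {w : G ⧸ V | cosetProj hVU w = (x : G ⧸ U) ∧ pm N V w = w'} =
        cosetImg V z₀ ((N ⊔ V) ⊓ U) := by
  induction w' using QuotientGroup.induction_on with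
  | H q =>
    induction q using QuotientGroup.induction_on with
    | H y =>
      have hw'2 : (((y : G ⧸ N)) : (G ⧸ N) ⧸ pbar N U) = (((x : G ⧸ N)) : _) := hw'
      obtain ⟨u, hu, huval⟩ := Subgroup.mem_map.mp (QuotientGroup.eq.mp hw'2)
      have huval' : ((u : G) : G ⧸ N) = ((y : G) : G ⧸ N)⁻¹ * ((x : G) : G ⧸ N) := huval
      refine ⟨x * u⁻¹, ?_⟩
      have hz₀U : ((x * u⁻¹ : G) : G ⧸ U) = (x : G ⧸ U) :=
        QuotientGroup.eq.mpr (by simpa using U.inv_mem (U.inv_mem hu))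
      have hz₀N : ((x * u⁻¹ : G) : G ⧸ N) = (y : G ⧸ N) := by
        rw [QuotientGroup.mk_mul, QuotientGroup.mk_inv, huval']
        group
      ext w
      induction w using QuotientGroup.induction_on with
      | H z =>
        simp only [Set.mem_setOf_eq, cosetProj_mk, pm_mk, mem_cosetImg]
        constructor
        · rintro ⟨h1, h2⟩
          refine ⟨z, ?_, rfl⟩
          have haU : (x * u⁻¹)⁻¹ * z ∈ U :=
            QuotientGroup.eq.mp ((hz₀U.trans h1.symm))
          have haNV : (x * u⁻¹)⁻¹ * z ∈ N ⊔ V := by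
            have h3 : (((x * u⁻¹ : G) : G ⧸ N) : (G ⧸ N) ⧸ pbar N V)
                = ((z : G ⧸ N) : _) := by rw [hz₀N]; exact h2.symm
            obtain ⟨v, hv, hvval⟩ := Subgroup.mem_map.mp (QuotientGroup.eq.mp h3)
            have hvval' : ((v : G) : G ⧸ N)
                = ((x * u⁻¹ : G) : G ⧸ N)⁻¹ * ((z : G) : G ⧸ N) := hvval
            have h4 : (((x * u⁻¹) * v : G) : G ⧸ N) = ((z : G) : G ⧸ N) := by
              rw [QuotientGroup.mk_mul, hvval']
              group
            have hn : ((x * u⁻¹) * v)⁻¹ * z ∈ N := QuotientGroup.eq.mp h4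
            have heq : (x * u⁻¹)⁻¹ * z = v * ((((x * u⁻¹) * v)⁻¹ * z)) := by group
            rw [heq]
            exact Subgroup.mul_mem _ (Subgroup.mem_sup_right hv)
              (Subgroup.mem_sup_left hn)
          exact Subgroup.mem_inf.mpr ⟨haNV, haU⟩
        · rintro ⟨g, hg, hgz⟩
          obtain ⟨hgNV, hgU⟩ := Subgroup.mem_inf.mp hg
          have e1 : ((g : G) : G ⧸ U) = ((z : G) : G ⧸ U) := congrArg (cosetProj hVU) hgz
          have e2 : pm N V ((g : G) : G ⧸ V) = pm N V ((z : G) : G ⧸ V) :=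
            congrArg (pm N V) hgz
          rw [pm_mk, pm_mk] at e2
          constructor
          · rw [← e1, ← hz₀U]
            exact (QuotientGroup.eq.mpr hgU).symm
          · rw [← e2]
            refine (QuotientGroup.eq.mpr ?_).symm
            have hπa : (((x * u⁻¹)⁻¹ * g : G) : G ⧸ N) ∈ pbar N V := by
              have hp : pbar N V = pbar N (N ⊔ V) := by
                rw [pbar, pbar, Subgroup.map_sup, QuotientGroup.map_mk'_self, bot_sup_eq]
              rw [hp]
              exact Subgroup.mem_map.mpr ⟨_, hgNV, rfl⟩
            have heq2 : ((y : G) : G ⧸ N)⁻¹ * ((g : G) : G ⧸ N)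
                = (((x * u⁻¹)⁻¹ * g : G) : G ⧸ N) := by
              rw [← hz₀N]
              simp only [QuotientGroup.mk_mul, QuotientGroup.mk_inv]
              done
            rw [heq2]
            exact hπa
      done

end BiAux
namespace BiAux

variable {G : Type} [Group G] [TopologicalSpace G] [IsTopologicalGroup G]
variable (N : Subgroup G) [N.Normal]

lemma push_trans (V U : Subgroup G) (hVU : V ≤ U)
    (hV : IsOpen (V : Set G)) (hU' : IsCompact (U : Set G))
    (hfin : ∀ c, (fib V U hVU c).Finite)
    (hfin' : ∀ c, (fib (pbar N V) (pbar N U) (pbar_mono N hVU) c).Finite)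
    (f : (G ⧸ U) →₀ ℚ) :
    Finsupp.lmapDomain ℚ ℚ (pm N V) (trans V U hVU hfin f)
      = trans (pbar N V) (pbar N U) (pbar_mono N hVU) hfin'
          (Finsupp.lmapDomain ℚ ℚ (pm N U) f) := by
  classical
  have key : (Finsupp.lmapDomain ℚ ℚ (pm N V) ∘ₗ (trans V U hVU hfin))
      = ((trans (pbar N V) (pbar N U) (pbar_mono N hVU) hfin') ∘ₗ
          (Finsupp.lmapDomain ℚ ℚ (pm N U))) := by
    apply Finsupp.lhom_ext'
    intro c
    apply LinearMap.ext_ring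
    induction c using QuotientGroup.induction_on with
    | H x =>
      simp only [LinearMap.comp_apply, Finsupp.lsingle_apply, Finsupp.lmapDomain_apply,
        Finsupp.mapDomain_single, trans_single]
      set K : Subgroup G := (N ⊔ V) ⊓ U with hK
      have hVK : V ≤ K := le_inf le_sup_right hVU
      set k : ℕ := V.relIndex K with hkdef
      set s : Finset (G ⧸ V) := (hfin ((x : G ⧸ U))).toFinset with hs
      set t : Finset ((G ⧸ N) ⧸ pbar N V) := (hfin' (pm N U ((x : G ⧸ U)))).toFinset with ht
      have hmapsto : ∀ w ∈ s, pm N V w ∈ t := by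
        intro w hw
        rw [hs, Set.Finite.mem_toFinset] at hw
        rw [ht, Set.Finite.mem_toFinset]
        show cosetProj (pbar_mono N hVU) (pm N V w) = pm N U ((x : G ⧸ U))
        rw [pm_cosetProj N hVU, hw]
      have hfiltercard : ∀ w' ∈ t, (s.filter (fun w => pm N V w = w')).card = k := by
        intro w' hw'
        rw [ht, Set.Finite.mem_toFinset] at hw'
        obtain ⟨z₀, hset⟩ := filter_descr N V U hVU x w' hw'
        have hcoe : ((s.filter (fun w => pm N V w = w')) : Set (G ⧸ V))
            = cosetImg V z₀ K := by
          rw [← hset]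
          ext w
          simp only [Finset.coe_filter, Set.mem_setOf_eq, hs, Set.Finite.mem_toFinset]
          rfl
        calc (s.filter (fun w => pm N V w = w')).card
            = ((s.filter (fun w => pm N V w = w')) : Set (G ⧸ V)).ncard :=
              (Set.ncard_coe_finset _).symm
          _ = (cosetImg V z₀ K).ncard := by rw [hcoe]
          _ = Nat.card (cosetImg V z₀ K) := (Nat.card_coe_set_eq _).symm
          _ = k := cosetImg_ncard V K hVK z₀
      have hsum : (∑ w ∈ s, Finsupp.single (pm N V w) (1 : ℚ))
          = k • ∑ w' ∈ t, Finsupp.single w' (1 : ℚ) := by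
        rw [← Finset.sum_fiberwise_of_maps_to hmapsto
          (fun w => Finsupp.single (pm N V w) (1 : ℚ)), Finset.smul_sum]
        refine Finset.sum_congr rfl (fun w' hw' => ?_)
        have : ∑ w ∈ s.filter (fun w => pm N V w = w'), Finsupp.single (pm N V w) (1 : ℚ)
            = ∑ _w ∈ s.filter (fun w => pm N V w = w'), Finsupp.single w' (1 : ℚ) := by
          refine Finset.sum_congr rfl (fun w hw => ?_)
          rw [(Finset.mem_filter.mp hw).2]
        rw [this, Finset.sum_const, hfiltercard w' hw']
      have hscard : s.card = V.relIndex U := by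
        calc s.card = ((s : Set (G ⧸ V))).ncard := (Set.ncard_coe_finset _).symm
          _ = (fib V U hVU ((x : G ⧸ U))).ncard := by rw [hs, Set.Finite.coe_toFinset]
          _ = (cosetImg V x U).ncard := by rw [fib_eq_cosetImg]
          _ = Nat.card (cosetImg V x U) := (Nat.card_coe_set_eq _).symm
          _ = V.relIndex U := cosetImg_ncard V U hVU x
      have htcard : t.card = (pbar N V).relIndex (pbar N U) := by
        calc t.card = ((t : Set ((G ⧸ N) ⧸ pbar N V))).ncard := (Set.ncard_coe_finset _).symm
          _ = (fib (pbar N V) (pbar N U) (pbar_mono N hVU) (pm N U ((x : G ⧸ U)))).ncard := by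
              rw [ht, Set.Finite.coe_toFinset]
          _ = (cosetImg (pbar N V) ((x : G ⧸ N)) (pbar N U)).ncard := by
              rw [pm_mk, fib_eq_cosetImg]
          _ = Nat.card (cosetImg (pbar N V) ((x : G ⧸ N)) (pbar N U)) :=
              (Nat.card_coe_set_eq _).symm
          _ = (pbar N V).relIndex (pbar N U) := cosetImg_ncard _ _ (pbar_mono N hVU) _
      have hprod : V.relIndex U = (pbar N V).relIndex (pbar N U) * k := by
        rw [← hscard, ← htcard]
        rw [Finset.card_eq_sum_card_fiberwise hmapsto]
        rw [Finset.sum_congr rfl hfiltercard, Finset.sum_const, smul_eq_mul]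
      have hr0 : V.relIndex U ≠ 0 := relIndex_ne_zero V U hV hU'
      have hk0 : (k : ℚ) ≠ 0 := by
        intro hk
        apply hr0
        rw [hprod, Nat.cast_eq_zero.mp hk, mul_zero]
      have hr'0 : ((pbar N V).relIndex (pbar N U) : ℚ) ≠ 0 := by
        intro hr'
        apply hr0
        rw [hprod, Nat.cast_eq_zero.mp hr', zero_mul]
      rw [Finsupp.mapDomain_smul, Finsupp.mapDomain_finset_sum]
      simp only [Finsupp.mapDomain_single]
      rw [hsum, ← Nat.cast_smul_eq_nsmul ℚ, smul_smul]
      congr 1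
      rw [hprod]
      push_cast
      field_simp
  exact LinearMap.congr_fun key f

end BiAux
namespace BiAux

lemma mapDomain_surj {α β : Type} (p : α → β) (hp : Function.Surjective p)
    (h : β →₀ ℚ) : ∃ f : α →₀ ℚ, Finsupp.mapDomain p f = h := by
  classical
  refine ⟨Finsupp.mapDomain (Function.surjInv hp) h, ?_⟩
  rw [← Finsupp.mapDomain_comp]
  have hpi : p ∘ Function.surjInv hp = id := funext (Function.surjInv_eq hp)
  rw [hpi, Finsupp.mapDomain_id]

lemma mapDomain_ker_span {α β : Type} (p : α → β) (f : α →₀ ℚ)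
    (h : Finsupp.mapDomain p f = 0) :
    f ∈ Submodule.span ℚ
      {z : α →₀ ℚ | ∃ a b : α, p a = p b ∧ z = Finsupp.single a 1 - Finsupp.single b 1} := by
  classical
  set S : Set (α →₀ ℚ) :=
    {z : α →₀ ℚ | ∃ a b : α, p a = p b ∧ z = Finsupp.single a 1 - Finsupp.single b 1} with hS
  generalize hn : f.support.card = n
  induction n using Nat.strong_induction_on generalizing f with
  | _ n ih =>
    rcases Nat.eq_zero_or_pos n with hn0 | hnpos
    · have hf0 : f = 0 := by
        rw [← Finsupp.support_eq_empty, ← Finset.card_eq_zero, hn, hn0]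
      rw [hf0]
      exact Submodule.zero_mem _
    · obtain ⟨a₀, ha₀⟩ : ∃ a₀, a₀ ∈ f.support := Finset.card_pos.mp (hn ▸ hnpos)
      by_cases hex : ∃ a₁, a₁ ∈ f.support ∧ a₁ ≠ a₀ ∧ p a₁ = p a₀
      · obtain ⟨a₁, ha₁, hne, hp₁⟩ := hex
        set z : α →₀ ℚ := Finsupp.single a₀ 1 - Finsupp.single a₁ 1 with hz
        set f' : α →₀ ℚ := f - (f a₀) • z with hf'
        have hzS : z ∈ S := ⟨a₀, a₁, hp₁.symm, rfl⟩
        have hsupp : f'.support ⊆ f.support.erase a₀ := by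
          intro a ha
          have haf : f' a ≠ 0 := Finsupp.mem_support_iff.mp ha
          rw [Finset.mem_erase, Finsupp.mem_support_iff]
          constructor
          · rintro rfl
            apply haf
            simp [hf', hz, Finsupp.single_apply, hne]
          · intro hfa
            apply haf
            have haa₀ : a ≠ a₀ := by
              rintro rfl; exact (Finsupp.mem_support_iff.mp ha₀) hfa
            have haa₁ : a ≠ a₁ := by
              rintro rfl; exact (Finsupp.mem_support_iff.mp ha₁) hfa
            simp [hf', hz, hfa, Finsupp.single_apply, Ne.symm haa₀, Ne.symm haa₁]
        have hcard : f'.support.card < n := by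
          calc f'.support.card ≤ (f.support.erase a₀).card := Finset.card_le_card hsupp
            _ < f.support.card := Finset.card_erase_lt_of_mem ha₀
            _ = n := hn
        have hmd : Finsupp.mapDomain p f' = 0 := by
          have hl : ∀ u : α →₀ ℚ, Finsupp.mapDomain p u = Finsupp.lmapDomain ℚ ℚ p u :=
            fun u => rfl
          rw [hl, hf', hz, map_sub, map_smul, map_sub, ← hl, ← hl, ← hl, h,
            Finsupp.mapDomain_single, Finsupp.mapDomain_single, hp₁]
          simp
        have hf'mem : f' ∈ Submodule.span ℚ S :=
          ih f'.support.card hcard f' hmd rfl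
        have : f = f' + (f a₀) • z := by rw [hf']; abel
        rw [this]
        exact Submodule.add_mem _ hf'mem
          (Submodule.smul_mem _ _ (Submodule.subset_span hzS))
      · exfalso
        have hval : (Finsupp.mapDomain p f) (p a₀) = f a₀ := by
          rw [Finsupp.mapDomain, Finsupp.sum_apply, Finsupp.sum]
          rw [Finset.sum_eq_single a₀]
          · rw [Finsupp.single_apply, if_pos rfl]
          · intro a ha hane
            rw [Finsupp.single_apply, if_neg]
            intro hpa
            exact hex ⟨a, ha, hane, hpa⟩
          · intro ha
            exact absurd ha₀ ha
        rw [h] at hval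
        exact (Finsupp.mem_support_iff.mp ha₀) hval.symm

end BiAux
namespace BiAux

variable {X : Type} [Group X] [TopologicalSpace X]

lemma ι_congr [IsTopologicalGroup X] (BB : RatStandardBimodule X)
    {A B : Subgroup X} (h : A = B) (hA : IsOpen (A : Set X)) (hA' : IsCompact (A : Set X))
    (hB : IsOpen (B : Set X)) (hB' : IsCompact (B : Set X)) (z : X) :
    BB.ι A hA hA' (Finsupp.single ((z : X ⧸ A)) 1) =
      BB.ι B hB hB' (Finsupp.single ((z : X ⧸ B)) 1) := by
  subst h; rfl

lemma conj_comap_coe (U : Subgroup X) (g : X) :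
    ((U.comap (MulAut.conj g).toMonoidHom : Subgroup X) : Set X)
      = (fun x => g⁻¹ * x * g) '' U := by
  ext x
  constructor
  · intro hx
    refine ⟨g * x * g⁻¹, hx, by group⟩
  · rintro ⟨u, hu, rfl⟩
    show g * (g⁻¹ * u * g) * g⁻¹ ∈ U
    have : g * (g⁻¹ * u * g) * g⁻¹ = u := by group
    rw [this]
    exact hu

lemma conj_isOpen [IsTopologicalGroup X] (U : Subgroup X) (g : X) (hU : IsOpen (U : Set X)) :
    IsOpen ((U.comap (MulAut.conj g).toMonoidHom : Subgroup X) : Set X) := by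
  have hc : Continuous (fun x : X => g * x * g⁻¹) :=
    (continuous_const.mul continuous_id).mul continuous_const
  have : ((U.comap (MulAut.conj g).toMonoidHom : Subgroup X) : Set X)
      = (fun x : X => g * x * g⁻¹) ⁻¹' (U : Set X) := rfl
  rw [this]
  exact hU.preimage hc

lemma conj_isCompact [IsTopologicalGroup X] (U : Subgroup X) (g : X)
    (hU' : IsCompact (U : Set X)) :
    IsCompact ((U.comap (MulAut.conj g).toMonoidHom : Subgroup X) : Set X) := by
  rw [conj_comap_coe]
  exact hU'.image ((continuous_const.mul continuous_id).mul continuous_const)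

end BiAux

namespace BiAux

variable {G : Type} [Group G] [TopologicalSpace G] [IsTopologicalGroup G]
variable (N : Subgroup G) [N.Normal]

lemma pbar_conj (U : Subgroup G) (g : G) :
    pbar N (U.comap (MulAut.conj g).toMonoidHom)
      = (pbar N U).comap (MulAut.conj ((g : G ⧸ N))).toMonoidHom := by
  ext q
  induction q using QuotientGroup.induction_on with
  | H y =>
    constructor
    · rintro ⟨x, hx, hxy⟩
      rw [← hxy]
      refine ⟨g * x * g⁻¹, hx, ?_⟩
      simp [QuotientGroup.mk_mul, QuotientGroup.mk_inv, MulAut.conj_apply]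
    · rintro ⟨u, hu, huv⟩
      refine ⟨g⁻¹ * u * g, ?_, ?_⟩
      · show g * (g⁻¹ * u * g) * g⁻¹ ∈ U
        have : g * (g⁻¹ * u * g) * g⁻¹ = u := by group
        rw [this]
        exact hu
      · have huv' : ((u : G) : G ⧸ N)
            = (g : G ⧸ N) * ((y : G) : G ⧸ N) * ((g : G) : G ⧸ N)⁻¹ := huv
        show ((g⁻¹ * u * g : G) : G ⧸ N) = ((y : G) : G ⧸ N)
        rw [QuotientGroup.mk_mul, QuotientGroup.mk_mul, QuotientGroup.mk_inv, huv']
        group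

end BiAux
open BiAux in
theorem biStandard_coinvariants_iso (G : Type) [Group G] [TopologicalSpace G] [IsTopologicalGroup G] [LocallyCompactSpace G] [TotallyDisconnectedSpace G] [T2Space G]
    (N : Subgroup G) [N.Normal] (hN : IsClosed (N : Set G))
    (BG : RatStandardBimodule G) (BQ : RatStandardBimodule (G ⧸ N))
    (C : Submodule ℚ BG.B)
    (hC : C = Submodule.span ℚ {z : BG.B | ∃ (ν : ↥N) (b : BG.B), z = BG.l (ν : G) b - b}) :
    ∃ e : (BG.B ⧸ C) ≃ₗ[ℚ] BQ.B,
      (∀ (g : G) (b : BG.B),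
        e (Submodule.Quotient.mk (BG.l g b)) =
          BQ.l ((g : G ⧸ N)) (e (Submodule.Quotient.mk b))) ∧
      (∀ (g : G) (b : BG.B),
        e (Submodule.Quotient.mk (BG.r g b)) =
          BQ.r ((g : G ⧸ N)) (e (Submodule.Quotient.mk b))) := by
  classical
  choose Ub hUb hUb' fb hfb using BG.ι_jointly_surjective
  have lmd : ∀ {α β : Type} (p : α → β) (u : α →₀ ℚ),
      Finsupp.lmapDomain ℚ ℚ p u = Finsupp.mapDomain p u := fun p u => rfl
  -- Key well-definedness lemma.
  have key : ∀ (U₁ : Subgroup G) (hU₁ : IsOpen (U₁ : Set G)) (hU₁' : IsCompact (U₁ : Set G))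
      (f₁ : (G ⧸ U₁) →₀ ℚ)
      (U₂ : Subgroup G) (hU₂ : IsOpen (U₂ : Set G)) (hU₂' : IsCompact (U₂ : Set G))
      (f₂ : (G ⧸ U₂) →₀ ℚ),
      BG.ι U₁ hU₁ hU₁' f₁ = BG.ι U₂ hU₂ hU₂' f₂ →
      BQ.ι (pbar N U₁) (pbar_isOpen N U₁ hU₁) (pbar_isCompact N U₁ hU₁')
          (Finsupp.lmapDomain ℚ ℚ (pm N U₁) f₁)
        = BQ.ι (pbar N U₂) (pbar_isOpen N U₂ hU₂) (pbar_isCompact N U₂ hU₂')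
          (Finsupp.lmapDomain ℚ ℚ (pm N U₂) f₂) := by
    intro U₁ hU₁ hU₁' f₁ U₂ hU₂ hU₂' f₂ heq
    set V : Subgroup G := U₁ ⊓ U₂ with hV
    have hVU₁ : V ≤ U₁ := inf_le_left
    have hVU₂ : V ≤ U₂ := inf_le_right
    have hVo : IsOpen (V : Set G) := by
      rw [hV, Subgroup.coe_inf]; exact hU₁.inter hU₂
    have hVc : IsCompact (V : Set G) := by
      refine hU₁'.of_isClosed_subset (Subgroup.isClosed_of_isOpen _ hVo) ?_
      rw [hV, Subgroup.coe_inf]; exact Set.inter_subset_left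
    have hfin₁ := fib_finite V U₁ hVU₁ hVo hU₁'
    have hfin₂ := fib_finite V U₂ hVU₂ hVo hU₂'
    have hfinQ₁ := fib_finite (pbar N V) (pbar N U₁) (pbar_mono N hVU₁)
      (pbar_isOpen N V hVo) (pbar_isCompact N U₁ hU₁')
    have hfinQ₂ := fib_finite (pbar N V) (pbar N U₂) (pbar_mono N hVU₂)
      (pbar_isOpen N V hVo) (pbar_isCompact N U₂ hU₂')
    have h2 : trans V U₁ hVU₁ hfin₁ f₁ = trans V U₂ hVU₂ hfin₂ f₂ := by
      apply BG.ι_injective V hVo hVc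
      rw [ι_trans BG V U₁ hVU₁ hU₁ hU₁' hVo hVc hfin₁ f₁,
        ι_trans BG V U₂ hVU₂ hU₂ hU₂' hVo hVc hfin₂ f₂]
      exact heq
    calc BQ.ι (pbar N U₁) (pbar_isOpen N U₁ hU₁) (pbar_isCompact N U₁ hU₁')
          (Finsupp.lmapDomain ℚ ℚ (pm N U₁) f₁)
        = BQ.ι (pbar N V) (pbar_isOpen N V hVo) (pbar_isCompact N V hVc)
            (trans (pbar N V) (pbar N U₁) (pbar_mono N hVU₁) hfinQ₁
              (Finsupp.lmapDomain ℚ ℚ (pm N U₁) f₁)) := by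
          rw [ι_trans BQ (pbar N V) (pbar N U₁) (pbar_mono N hVU₁)
            (pbar_isOpen N U₁ hU₁) (pbar_isCompact N U₁ hU₁')
            (pbar_isOpen N V hVo) (pbar_isCompact N V hVc) hfinQ₁]
      _ = BQ.ι (pbar N V) (pbar_isOpen N V hVo) (pbar_isCompact N V hVc)
            (Finsupp.lmapDomain ℚ ℚ (pm N V) (trans V U₁ hVU₁ hfin₁ f₁)) := by
          rw [push_trans N V U₁ hVU₁ hVo hU₁' hfin₁ hfinQ₁ f₁]
      _ = BQ.ι (pbar N V) (pbar_isOpen N V hVo) (pbar_isCompact N V hVc)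
            (Finsupp.lmapDomain ℚ ℚ (pm N V) (trans V U₂ hVU₂ hfin₂ f₂)) := by rw [h2]
      _ = BQ.ι (pbar N V) (pbar_isOpen N V hVo) (pbar_isCompact N V hVc)
            (trans (pbar N V) (pbar N U₂) (pbar_mono N hVU₂) hfinQ₂
              (Finsupp.lmapDomain ℚ ℚ (pm N U₂) f₂)) := by
          rw [push_trans N V U₂ hVU₂ hVo hU₂' hfin₂ hfinQ₂ f₂]
      _ = BQ.ι (pbar N U₂) (pbar_isOpen N U₂ hU₂) (pbar_isCompact N U₂ hU₂')
            (Finsupp.lmapDomain ℚ ℚ (pm N U₂) f₂) := by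
          rw [ι_trans BQ (pbar N V) (pbar N U₂) (pbar_mono N hVU₂)
            (pbar_isOpen N U₂ hU₂) (pbar_isCompact N U₂ hU₂')
            (pbar_isOpen N V hVo) (pbar_isCompact N V hVc) hfinQ₂]
  -- The function underlying `Φ`.
  set φfun : BG.B → BQ.B := fun b =>
    BQ.ι (pbar N (Ub b)) (pbar_isOpen N (Ub b) (hUb b)) (pbar_isCompact N (Ub b) (hUb' b))
      (Finsupp.lmapDomain ℚ ℚ (pm N (Ub b)) (fb b)) with hφfun
  have φval : ∀ (b : BG.B) (U₁ : Subgroup G) (hU₁ : IsOpen (U₁ : Set G))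
      (hU₁' : IsCompact (U₁ : Set G)) (f₁ : (G ⧸ U₁) →₀ ℚ),
      BG.ι U₁ hU₁ hU₁' f₁ = b →
      φfun b = BQ.ι (pbar N U₁) (pbar_isOpen N U₁ hU₁) (pbar_isCompact N U₁ hU₁')
        (Finsupp.lmapDomain ℚ ℚ (pm N U₁) f₁) := by
    intro b U₁ hU₁ hU₁' f₁ h
    exact key (Ub b) (hUb b) (hUb' b) (fb b) U₁ hU₁ hU₁' f₁ ((hfb b).trans h.symm)
  have hadd : ∀ b₁ b₂ : BG.B, φfun (b₁ + b₂) = φfun b₁ + φfun b₂ := by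
    intro b₁ b₂
    set U₁ : Subgroup G := Ub b₁
    set U₂ : Subgroup G := Ub b₂
    set V : Subgroup G := U₁ ⊓ U₂ with hV
    have hVU₁ : V ≤ U₁ := inf_le_left
    have hVU₂ : V ≤ U₂ := inf_le_right
    have hVo : IsOpen (V : Set G) := by
      rw [hV, Subgroup.coe_inf]; exact (hUb b₁).inter (hUb b₂)
    have hVc : IsCompact (V : Set G) := by
      refine (hUb' b₁).of_isClosed_subset (Subgroup.isClosed_of_isOpen _ hVo) ?_
      rw [hV, Subgroup.coe_inf]; exact Set.inter_subset_left
    have hfin₁ := fib_finite V U₁ hVU₁ hVo (hUb' b₁)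
    have hfin₂ := fib_finite V U₂ hVU₂ hVo (hUb' b₂)
    have hfinQ₁ := fib_finite (pbar N V) (pbar N U₁) (pbar_mono N hVU₁)
      (pbar_isOpen N V hVo) (pbar_isCompact N U₁ (hUb' b₁))
    have hfinQ₂ := fib_finite (pbar N V) (pbar N U₂) (pbar_mono N hVU₂)
      (pbar_isOpen N V hVo) (pbar_isCompact N U₂ (hUb' b₂))
    have hrep : BG.ι V hVo hVc
        (trans V U₁ hVU₁ hfin₁ (fb b₁) + trans V U₂ hVU₂ hfin₂ (fb b₂)) = b₁ + b₂ := by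
      rw [map_add, ι_trans BG V U₁ hVU₁ (hUb b₁) (hUb' b₁) hVo hVc hfin₁,
        ι_trans BG V U₂ hVU₂ (hUb b₂) (hUb' b₂) hVo hVc hfin₂, hfb b₁, hfb b₂]
    rw [φval (b₁ + b₂) V hVo hVc _ hrep, map_add, map_add]
    congr 1
    · rw [push_trans N V U₁ hVU₁ hVo (hUb' b₁) hfin₁ hfinQ₁,
        ι_trans BQ (pbar N V) (pbar N U₁) (pbar_mono N hVU₁)
          (pbar_isOpen N U₁ (hUb b₁)) (pbar_isCompact N U₁ (hUb' b₁))
          (pbar_isOpen N V hVo) (pbar_isCompact N V hVc) hfinQ₁]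
    · rw [push_trans N V U₂ hVU₂ hVo (hUb' b₂) hfin₂ hfinQ₂,
        ι_trans BQ (pbar N V) (pbar N U₂) (pbar_mono N hVU₂)
          (pbar_isOpen N U₂ (hUb b₂)) (pbar_isCompact N U₂ (hUb' b₂))
          (pbar_isOpen N V hVo) (pbar_isCompact N V hVc) hfinQ₂]
  have hsmul : ∀ (c : ℚ) (b : BG.B), φfun (c • b) = c • φfun b := by
    intro c b
    have hrep : BG.ι (Ub b) (hUb b) (hUb' b) (c • fb b) = c • b := by
      rw [map_smul, hfb b]
    rw [φval (c • b) (Ub b) (hUb b) (hUb' b) _ hrep, map_smul, map_smul]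
  set Φ : BG.B →ₗ[ℚ] BQ.B :=
    { toFun := φfun
      map_add' := hadd
      map_smul' := hsmul } with hΦ
  have hΦapp : ∀ b, Φ b = φfun b := fun b => rfl
  -- Left equivariance.
  have hleft : ∀ (g : G) (b : BG.B), Φ (BG.l g b) = BQ.l ((g : G ⧸ N)) (Φ b) := by
    intro g b
    have hrep : BG.ι (Ub b) (hUb b) (hUb' b)
        (Finsupp.mapDomain (fun w : G ⧸ (Ub b) => g • w) (fb b)) = BG.l g b := by
      rw [BG.ι_left, hfb b]
    rw [hΦapp, φval (BG.l g b) (Ub b) (hUb b) (hUb' b) _ hrep]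
    have hcomp : Finsupp.lmapDomain ℚ ℚ (pm N (Ub b))
        (Finsupp.mapDomain (fun w : G ⧸ (Ub b) => g • w) (fb b))
        = Finsupp.mapDomain (fun w : (G ⧸ N) ⧸ pbar N (Ub b) => ((g : G ⧸ N)) • w)
            (Finsupp.mapDomain (pm N (Ub b)) (fb b)) := by
      rw [lmd, ← Finsupp.mapDomain_comp, ← Finsupp.mapDomain_comp]
      congr 1
      funext w
      exact pm_smul N (Ub b) g w
    rw [hcomp, BQ.ι_left]
    rfl
  -- Right equivariance.
  have hright : ∀ (g : G) (b : BG.B), Φ (BG.r g b) = BQ.r ((g : G ⧸ N)) (Φ b) := by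
    intro g b
    have main : ∀ (U : Subgroup G) (hU : IsOpen (U : Set G)) (hU' : IsCompact (U : Set G))
        (f : (G ⧸ U) →₀ ℚ),
        Φ (BG.r g (BG.ι U hU hU' f)) = BQ.r ((g : G ⧸ N)) (Φ (BG.ι U hU hU' f)) := by
      intro U hU hU' f
      induction f using Finsupp.induction_linear with
      | zero => simp
      | add f₁ f₂ hf₁ hf₂ =>
        rw [map_add, map_add, map_add, map_add, map_add, hf₁, hf₂]
      | single c a =>
        induction c using QuotientGroup.induction_on with
        | H x =>
          have hsingle : (Finsupp.single ((x : G ⧸ U)) a)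
              = a • Finsupp.single ((x : G ⧸ U)) (1 : ℚ) := by
            rw [Finsupp.smul_single, smul_eq_mul, mul_one]
          rw [hsingle, map_smul, map_smul, map_smul, map_smul, map_smul]
          congr 1
          -- now the single coset case
          set Ug : Subgroup G := U.comap (MulAut.conj g).toMonoidHom with hUg
          have hUgo : IsOpen (Ug : Set G) := conj_isOpen U g hU
          have hUgc : IsCompact (Ug : Set G) := conj_isCompact U g hU'
          have hstep : BG.r g (BG.ι U hU hU' (Finsupp.single ((x : G ⧸ U)) 1))
              = BG.ι Ug hUgo hUgc (Finsupp.single (((x * g : G) : G ⧸ Ug)) 1) :=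
            BG.ι_right U hU hU' g x hUgo hUgc
          rw [hstep, hΦapp, φval _ Ug hUgo hUgc _ rfl, lmd, Finsupp.mapDomain_single, pm_mk]
          have hφb : Φ (BG.ι U hU hU' (Finsupp.single ((x : G ⧸ U)) 1))
              = BQ.ι (pbar N U) (pbar_isOpen N U hU) (pbar_isCompact N U hU')
                  (Finsupp.single ((((x : G ⧸ N)) : (G ⧸ N) ⧸ pbar N U)) 1) := by
            rw [hΦapp, φval _ U hU hU' _ rfl, lmd, Finsupp.mapDomain_single, pm_mk]
          rw [hφb]
          have hQgo : IsOpen (((pbar N U).comap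
              (MulAut.conj ((g : G ⧸ N))).toMonoidHom : Subgroup (G ⧸ N)) : Set (G ⧸ N)) := by
            rw [← pbar_conj]; exact pbar_isOpen N Ug hUgo
          have hQgc : IsCompact (((pbar N U).comap
              (MulAut.conj ((g : G ⧸ N))).toMonoidHom : Subgroup (G ⧸ N)) : Set (G ⧸ N)) := by
            rw [← pbar_conj]; exact pbar_isCompact N Ug hUgc
          rw [BQ.ι_right (pbar N U) (pbar_isOpen N U hU) (pbar_isCompact N U hU')
            ((g : G ⧸ N)) ((x : G ⧸ N)) hQgo hQgc]
          have hmul : ((x : G ⧸ N)) * ((g : G ⧸ N)) = (((x * g : G) : G ⧸ N)) := by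
            rw [QuotientGroup.mk_mul]
          rw [hmul]
          exact ι_congr BQ (pbar_conj N U g) (pbar_isOpen N Ug hUgo)
            (pbar_isCompact N Ug hUgc) hQgo hQgc ((x * g : G))
    have := main (Ub b) (hUb b) (hUb' b) (fb b)
    rwa [hfb b] at this
  -- Surjectivity.
  have hsurj : Function.Surjective Φ := by
    intro y
    obtain ⟨W, hW, hW', h, hy⟩ := BQ.ι_jointly_surjective y
    obtain ⟨U₀, hU₀, hU₀', f₀, -⟩ := BG.ι_jointly_surjective 0
    set U : Subgroup G := U₀ ⊓ W.comap (QuotientGroup.mk' N) with hU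
    have hcomapo : IsOpen ((W.comap (QuotientGroup.mk' N) : Subgroup G) : Set G) :=
      hW.preimage QuotientGroup.continuous_mk
    have hUo : IsOpen (U : Set G) := by
      rw [hU, Subgroup.coe_inf]; exact hU₀.inter hcomapo
    have hUc : IsCompact (U : Set G) := by
      refine hU₀'.of_isClosed_subset (Subgroup.isClosed_of_isOpen _ hUo) ?_
      rw [hU, Subgroup.coe_inf]; exact Set.inter_subset_left
    have hle : pbar N U ≤ W := by
      refine le_trans (Subgroup.map_mono inf_le_right) ?_
      exact Subgroup.map_comap_le _ _
    have hfinQ := fib_finite (pbar N U) W hle (pbar_isOpen N U hUo) hW'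
    obtain ⟨f, hf⟩ := mapDomain_surj (pm N U) (pm_surjective N U)
      (trans (pbar N U) W hle hfinQ h)
    refine ⟨BG.ι U hUo hUc f, ?_⟩
    rw [hΦapp, φval _ U hUo hUc f rfl, lmd, hf,
      ι_trans BQ (pbar N U) W hle hW hW' (pbar_isOpen N U hUo) (pbar_isCompact N U hUc)
        hfinQ h, hy]
  -- Kernel.
  have hker_le : C ≤ LinearMap.ker Φ := by
    rw [hC]
    rw [Submodule.span_le]
    rintro z ⟨ν, b, rfl⟩
    rw [SetLike.mem_coe, LinearMap.mem_ker, map_sub, hleft (ν : G) b]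
    have hν1 : (((ν : G) : G ⧸ N)) = 1 := (QuotientGroup.eq_one_iff _).mpr ν.2
    rw [hν1, BQ.l_one, sub_self]
  have hker_ge : LinearMap.ker Φ ≤ C := by
    intro b hb
    have hb0 : Φ b = 0 := LinearMap.mem_ker.mp hb
    have hpush0 : Finsupp.mapDomain (pm N (Ub b)) (fb b) = 0 := by
      apply BQ.ι_injective (pbar N (Ub b)) (pbar_isOpen N (Ub b) (hUb b))
        (pbar_isCompact N (Ub b) (hUb' b))
      rw [map_zero, ← lmd]
      exact hb0
    have hspan := mapDomain_ker_span (pm N (Ub b)) (fb b) hpush0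
    have hmap : b ∈ Submodule.map (BG.ι (Ub b) (hUb b) (hUb' b))
        (Submodule.span ℚ {z : (G ⧸ Ub b) →₀ ℚ |
          ∃ a c : G ⧸ Ub b, pm N (Ub b) a = pm N (Ub b) c ∧
            z = Finsupp.single a 1 - Finsupp.single c 1}) := by
      exact ⟨fb b, hspan, hfb b⟩
    rw [Submodule.map_span] at hmap
    refine Submodule.span_le.mpr ?_ hmap
    rintro z ⟨w, ⟨a, c, hac, rfl⟩, rfl⟩
    obtain ⟨ν, hν, hca⟩ := pm_fib N hac
    have hsingle : Finsupp.single c (1 : ℚ)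
        = Finsupp.mapDomain (fun w : G ⧸ Ub b => ν • w) (Finsupp.single a 1) := by
      rw [Finsupp.mapDomain_single, hca]
    have hgen : BG.l ν (BG.ι (Ub b) (hUb b) (hUb' b) (Finsupp.single a 1))
          - BG.ι (Ub b) (hUb b) (hUb' b) (Finsupp.single a 1) ∈ C := by
      rw [hC]
      exact Submodule.subset_span ⟨⟨ν, hν⟩, _, rfl⟩
    have hz : BG.ι (Ub b) (hUb b) (hUb' b) (Finsupp.single a 1 - Finsupp.single c 1)
        = -(BG.l ν (BG.ι (Ub b) (hUb b) (hUb' b) (Finsupp.single a 1))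
            - BG.ι (Ub b) (hUb b) (hUb' b) (Finsupp.single a 1)) := by
      rw [map_sub, hsingle, BG.ι_left]
      abel
    rw [SetLike.mem_coe, hz]
    exact neg_mem hgen
  -- Build the equivalence.
  have hkerC : C ≤ LinearMap.ker Φ := hker_le
  set down : (BG.B ⧸ C) →ₗ[ℚ] BQ.B := C.liftQ Φ hkerC with hdown
  have hdownmk : ∀ b : BG.B, down (Submodule.Quotient.mk b) = Φ b := fun b =>
    Submodule.liftQ_apply C Φ b
  have hinj : Function.Injective down := by
    rw [← LinearMap.ker_eq_bot]
    exact Submodule.ker_liftQ_eq_bot C Φ hkerC hker_ge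
  have hsurj' : Function.Surjective down := by
    intro y
    obtain ⟨b, hb⟩ := hsurj y
    exact ⟨Submodule.Quotient.mk b, by rw [hdownmk, hb]⟩
  refine ⟨LinearEquiv.ofBijective down ⟨hinj, hsurj'⟩, ?_, ?_⟩
  · intro g b
    show down _ = BQ.l _ (down _)
    rw [hdownmk, hdownmk]
    exact hleft g b
  · intro g b
    show down _ = BQ.r _ (down _)
    rw [hdownmk, hdownmk]
    exact hright g b
end
end

section
/- Let G be a compactly presented t.d.l.c. group and H a group retract of G, that is, a closed subgroup of G for which there exists a continuous epimorphism ρ : G → H restricting to the identity on H. Then H is compactly presented. -/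
noncomputable section

open scoped Pointwise

/-- A bundled `G`-set. -/
structure GSet (G : Type) [Group G] where
  carrier : Type
  [mulAction : MulAction G carrier]

attribute [instance] GSet.mulAction

/-- All point stabilizers of the `G`-action on `Ω` are open. -/
def OpenStabilizers (G : Type) [Group G] [TopologicalSpace G] (Ω : Type) [MulAction G Ω] : Prop :=
  ∀ ω : Ω, IsOpen {g : G | g • ω = ω}

/-- All point stabilizers of the `G`-action on `Ω` are compact. -/
def CompactStabilizers (G : Type) [Group G] [TopologicalSpace G] (Ω : Type) [MulAction G Ω] :
    Prop :=
  ∀ ω : Ω, IsCompact {g : G | g • ω = ω}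

/-- The `G`-action on `Ω` has finitely many orbits. -/
def FinitelyManyOrbits (G : Type) [Group G] (Ω : Type) [MulAction G Ω] : Prop :=
  Finite (Quotient (MulAction.orbitRel G Ω))

/-- A module with a `G`-action is a *discrete* module if all element stabilizers are open. -/
def IsDiscreteModule (G : Type) [Group G] [TopologicalSpace G] (M : Type) [AddCommMonoid M]
    [DistribMulAction G M] : Prop :=
  ∀ m : M, IsOpen {g : G | g • m = m}

/-- A submodule `K` (of a module with commuting `R`- and `G`-actions) is finitely generated
as an `R[G]`-module: there is a finite subset of `K` such that every element of `K` lies in the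
`R`-span of its `G`-translates. -/
def SubmoduleFGOver (R : Type) [CommRing R] (G : Type) [Group G] {M : Type} [AddCommGroup M]
    [Module R M] (act : G → M → M) (K : Submodule R M) : Prop :=
  ∃ s : Finset M, (↑s : Set M) ⊆ (K : Set M) ∧
    ∀ m ∈ K, m ∈ Submodule.span R {x : M | ∃ g : G, ∃ y ∈ s, x = act g y}

/-- A resolution of the `R[G]`-module `M` by proper discrete permutation modules:
an exact sequence `⋯ → R[Ω₁] → R[Ω₀] → M → 0` where each `Ωₖ` is a `G`-set with
compact open stabilizers. -/
structure DiscretePermResolution (R : Type) [CommRing R] (G : Type) [Group G]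
    [TopologicalSpace G] (M : Type) [AddCommGroup M] [Module R M] [DistribMulAction G M] where
  Ω : ℕ → GSet G
  openStab : ∀ k, OpenStabilizers G (Ω k).carrier
  compactStab : ∀ k, CompactStabilizers G (Ω k).carrier
  d : ∀ k, ((Ω (k+1)).carrier →₀ R) →ₗ[R] ((Ω k).carrier →₀ R)
  ε : ((Ω 0).carrier →₀ R) →ₗ[R] M
  d_equivariant : ∀ (k : ℕ) (g : G) (x : (Ω (k+1)).carrier →₀ R),
      d k (Finsupp.mapDomain (g • ·) x) = Finsupp.mapDomain (g • ·) (d k x)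
  ε_equivariant : ∀ (g : G) (x : (Ω 0).carrier →₀ R),
      ε (Finsupp.mapDomain (g • ·) x) = g • ε x
  ε_surj : Function.Surjective ε
  exact₀ : Function.Exact (d 0) ε
  exact : ∀ k, Function.Exact (d (k+1)) (d k)

/-- The discrete `R[G]`-module `M` has type `FP_n` over `R` : it admits a proper discrete
permutation resolution which is finitely generated in all degrees `k ≤ n`. -/
def ModuleOfTypeFP (R : Type) [CommRing R] (G : Type) [Group G] [TopologicalSpace G]
    (M : Type) [AddCommGroup M] [Module R M] [DistribMulAction G M] (n : ℕ∞) : Prop :=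
  ∃ P : DiscretePermResolution R G M, ∀ k : ℕ, (k : ℕ∞) ≤ n → FinitelyManyOrbits G (P.Ω k).carrier

/-- A resolution of the trivial `R[G]`-module `R` by proper discrete permutation modules. -/
structure GroupPermResolution (R : Type) [CommRing R] (G : Type) [Group G]
    [TopologicalSpace G] where
  Ω : ℕ → GSet G
  openStab : ∀ k, OpenStabilizers G (Ω k).carrier
  compactStab : ∀ k, CompactStabilizers G (Ω k).carrier
  d : ∀ k, ((Ω (k+1)).carrier →₀ R) →ₗ[R] ((Ω k).carrier →₀ R)
  ε : ((Ω 0).carrier →₀ R) →ₗ[R] R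
  d_equivariant : ∀ (k : ℕ) (g : G) (x : (Ω (k+1)).carrier →₀ R),
      d k (Finsupp.mapDomain (g • ·) x) = Finsupp.mapDomain (g • ·) (d k x)
  ε_equivariant : ∀ (g : G) (x : (Ω 0).carrier →₀ R),
      ε (Finsupp.mapDomain (g • ·) x) = ε x
  ε_surj : Function.Surjective ε
  exact₀ : Function.Exact (d 0) ε
  exact : ∀ k, Function.Exact (d (k+1)) (d k)

/-- The t.d.l.c. group `G` has type `FP_n` over `R`: the trivial discrete `R[G]`-module `R`
admits a proper discrete permutation resolution, finitely generated in degrees `≤ n`. -/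
def GroupOfTypeFP (R : Type) [CommRing R] (G : Type) [Group G] [TopologicalSpace G]
    (n : ℕ∞) : Prop :=
  ∃ P : GroupPermResolution R G, ∀ k : ℕ, (k : ℕ∞) ≤ n → FinitelyManyOrbits G (P.Ω k).carrier

/-- A discrete `G`-CW-complex, described via characteristic maps: a Hausdorff space with a
continuous cell-permuting `G`-action, cells indexed by `G`-sets with open stabilizers,
boundary spheres attached to lower skeleta, open cells partitioning the space, and carrying
the weak topology determined by the closed cells. -/
structure DiscreteGCW (G : Type) [Group G] [TopologicalSpace G] where
  space : Type
  [topo : TopologicalSpace space]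
  [t2 : T2Space space]
  nonempty : Nonempty space
  [act : MulAction G space]
  continuous_smul : Continuous fun p : G × space => p.1 • p.2
  cells : ℕ → GSet G
  cellOpenStab : ∀ n, OpenStabilizers G (cells n).carrier
  char : ∀ n, (cells n).carrier → EuclideanSpace ℝ (Fin n) → space
  char_contOn : ∀ n c, ContinuousOn (char n c) (Metric.closedBall 0 1)
  char_equivariant : ∀ (n : ℕ) (g : G) (c : (cells n).carrier) (x : EuclideanSpace ℝ (Fin n)),
      x ∈ Metric.closedBall (0 : EuclideanSpace ℝ (Fin n)) 1 →
        char n (g • c) x = g • char n c x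
  sphere_boundary : ∀ (n : ℕ) (c : (cells (n+1)).carrier) (x : EuclideanSpace ℝ (Fin (n+1))),
      ‖x‖ = 1 → ∃ m ≤ n, ∃ c' : (cells m).carrier,
        ∃ y ∈ Metric.closedBall (0 : EuclideanSpace ℝ (Fin m)) 1, char (n+1) c x = char m c' y
  cell_partition : ∀ p : space,
      ∃! q : Σ n : ℕ, (cells n).carrier × EuclideanSpace ℝ (Fin n),
        ‖q.2.2‖ < 1 ∧ char q.1 q.2.1 q.2.2 = p
  weak_topology : ∀ A : Set space, IsClosed A ↔ ∀ (n : ℕ) (c : (cells n).carrier),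
      IsClosed ((fun x : Metric.closedBall (0 : EuclideanSpace ℝ (Fin n)) 1 =>
        char n c ↑x) ⁻¹' A)

attribute [instance] DiscreteGCW.topo DiscreteGCW.t2 DiscreteGCW.act

/-- `X` is a proper discrete `G`-CW-complex: the cell stabilizers are compact (and open). -/
def DiscreteGCW.Proper {G : Type} [Group G] [TopologicalSpace G] (X : DiscreteGCW G) : Prop :=
  ∀ n, CompactStabilizers G (X.cells n).carrier

/-- `X` is of type `F_n`: there are finitely many `G`-orbits of `k`-cells for all `k ≤ n`. -/
def DiscreteGCW.FiniteType {G : Type} [Group G] [TopologicalSpace G] (X : DiscreteGCW G)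
    (n : ℕ∞) : Prop :=
  ∀ k : ℕ, (k : ℕ∞) ≤ n → FinitelyManyOrbits G (X.cells k).carrier

/-- The t.d.l.c. group `G` has type `F_n`: there is a contractible proper discrete
`G`-CW-complex of type `F_n`. -/
def GroupOfTypeF (G : Type) [Group G] [TopologicalSpace G] (n : ℕ∞) : Prop :=
  ∃ X : DiscreteGCW G, ContractibleSpace X.space ∧ X.Proper ∧ X.FiniteType n

/-- A topological group is compactly generated if it is generated by a compact subset. -/
def CompactlyGeneratedGroup (G : Type) [Group G] [TopologicalSpace G] : Prop :=
  ∃ S : Set G, IsCompact S ∧ Subgroup.closure S = ⊤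

/-- A topological group is compactly presented if it admits a presentation `⟨S ∣ R⟩`, as an
abstract group, with `S` a compact set of generators and the relators in `R` of bounded
length. -/
def CompactlyPresentedGroup (G : Type) [Group G] [TopologicalSpace G] : Prop :=
  ∃ S : Set G, IsCompact S ∧
    Function.Surjective (FreeGroup.lift (fun s : S => (s : G))) ∧
    ∃ n : ℕ,
      Subgroup.normalClosure
          {w : FreeGroup S | FreeGroup.lift (fun s : S => (s : G)) w = 1 ∧
            ∃ l : List (S × Bool), FreeGroup.mk l = w ∧ l.length ≤ n}
        = MonoidHom.ker (FreeGroup.lift (fun s : S => (s : G)))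


private lemma word_of_mem_pow {G : Type} [Group G] (S : Set G) :
    ∀ (k : ℕ) (g : G), g ∈ (S ∪ S⁻¹ ∪ {1} : Set G) ^ k →
      ∃ l : List (↥S × Bool),
        FreeGroup.lift (fun s : S => (s : G)) (FreeGroup.mk l) = g ∧ l.length ≤ k := by
  intro k
  induction k with
  | zero =>
    intro g hg
    rw [pow_zero] at hg
    rw [Set.mem_one] at hg
    refine ⟨[], ?_, by simp⟩
    rw [hg]
    have : FreeGroup.mk ([] : List (↥S × Bool)) = 1 := rfl
    rw [this, map_one]
  | succ k ih =>
    intro g hg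
    rw [pow_succ] at hg
    rw [Set.mem_mul] at hg
    obtain ⟨a, ha, b, hb, rfl⟩ := hg
    obtain ⟨l, hl, hlen⟩ := ih a ha
    rcases hb with hb | hb
    · rcases hb with hb | hb
      · refine ⟨l ++ [(⟨b, hb⟩, true)], ?_, ?_⟩
        · rw [← FreeGroup.mul_mk, map_mul, hl]
          congr 1
          have : FreeGroup.mk [((⟨b, hb⟩ : S), true)] = FreeGroup.of (⟨b, hb⟩ : S) := rfl
          rw [this, FreeGroup.lift_apply_of]
        · simp; omega
      · rw [Set.mem_inv] at hb
        refine ⟨l ++ [(⟨b⁻¹, hb⟩, false)], ?_, ?_⟩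
        · rw [← FreeGroup.mul_mk, map_mul, hl]
          congr 1
          have h1 : FreeGroup.mk [((⟨b⁻¹, hb⟩ : S), false)]
              = (FreeGroup.of (⟨b⁻¹, hb⟩ : S))⁻¹ := by
            rw [FreeGroup.of, FreeGroup.inv_mk]
            simp [FreeGroup.invRev]
          rw [h1, map_inv, FreeGroup.lift_apply_of]
          simp
        · simp; omega
    · rw [Set.mem_singleton_iff] at hb
      subst hb
      exact ⟨l, by rw [mul_one]; exact hl, hlen.trans (Nat.le_succ k)⟩

private lemma compact_subset_pow {G : Type} [Group G] [TopologicalSpace G] [IsTopologicalGroup G]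
    [LocallyCompactSpace G] [T2Space G] {S Q : Set G} (hS : IsCompact S)
    (hgen : Subgroup.closure S = ⊤) (hQ : IsCompact Q) :
    ∃ m : ℕ, Q ⊆ (S ∪ S⁻¹ ∪ {1} : Set G) ^ m := by
  set T : Set G := S ∪ S⁻¹ ∪ {1} with hT
  have h1 : (1 : G) ∈ T := by simp [hT]
  have hsymm : ∀ g ∈ T, g⁻¹ ∈ T := by
    intro g hg
    rcases hg with (hg | hg) | hg
    · exact Or.inl (Or.inr (by rw [Set.mem_inv, inv_inv]; exact hg))
    · exact Or.inl (Or.inl (Set.mem_inv.mp hg))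
    · simp_all
  have hpowsymm : ∀ k, ∀ g ∈ T ^ k, g⁻¹ ∈ T ^ k := by
    intro k
    induction k with
    | zero => intro g hg; rw [pow_zero, Set.mem_one] at hg ⊢; simp [hg]
    | succ k ih =>
      intro g hg
      rw [pow_succ, Set.mem_mul] at hg
      obtain ⟨a, ha, b, hb, rfl⟩ := hg
      rw [mul_inv_rev, pow_succ']
      exact Set.mul_mem_mul (hsymm b hb) (ih a ha)
  have hcover : ∀ g : G, ∃ k, g ∈ T ^ k := by
    intro g
    have hg : g ∈ Subgroup.closure S := hgen ▸ Subgroup.mem_top g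
    refine Subgroup.closure_induction (p := fun g _ => ∃ k, g ∈ T ^ k) ?_ ?_ ?_ ?_ hg
    · intro x hx
      exact ⟨1, by rw [pow_one]; exact Or.inl (Or.inl hx)⟩
    · exact ⟨0, by rw [pow_zero, Set.mem_one]⟩
    · rintro x y _ _ ⟨k₁, hk₁⟩ ⟨k₂, hk₂⟩
      exact ⟨k₁ + k₂, by rw [pow_add]; exact Set.mul_mem_mul hk₁ hk₂⟩
    · rintro x _ ⟨k, hk⟩
      exact ⟨k, hpowsymm k x hk⟩
  have hTcomp : IsCompact T := (hS.union hS.inv).union isCompact_singleton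
  have hpowcomp : ∀ k, IsCompact (T ^ k) := by
    intro k
    induction k with
    | zero => rw [pow_zero]; exact isCompact_singleton
    | succ k ih => rw [pow_succ]; exact ih.mul hTcomp
  have hpowclosed : ∀ k, IsClosed (T ^ k) := fun k => (hpowcomp k).isClosed
  have hU : ⋃ k, T ^ k = Set.univ := by
    rw [Set.eq_univ_iff_forall]
    intro g
    obtain ⟨k, hk⟩ := hcover g
    exact Set.mem_iUnion.2 ⟨k, hk⟩
  obtain ⟨k₀, x, hx⟩ := nonempty_interior_of_iUnion_of_closed hpowclosed hU
  set U : Set G := (fun y => x * y) ⁻¹' interior (T ^ k₀) with hUdef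
  have hUopen : IsOpen U := (isOpen_interior).preimage (continuous_mul_left x)
  have h1U : (1 : G) ∈ U := by
    rw [hUdef]; simp only [Set.mem_preimage, mul_one]; exact hx
  have hUsub : U ⊆ T ^ (k₀ + k₀) := by
    intro y hy
    have hxy : x * y ∈ T ^ k₀ := interior_subset hy
    have hxi : x⁻¹ ∈ T ^ k₀ := hpowsymm k₀ x (interior_subset hx)
    have : y = x⁻¹ * (x * y) := by group
    rw [this, pow_add]
    exact Set.mul_mem_mul hxi hxy
  have hVopen : ∀ k : ℕ, IsOpen (T ^ k * U) := fun k => hUopen.mul_left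
  have hQcov : Q ⊆ ⋃ k : ℕ, T ^ k * U := by
    intro g hg
    obtain ⟨k, hk⟩ := hcover g
    exact Set.mem_iUnion.2 ⟨k, by simpa using Set.mul_mem_mul hk h1U⟩
  obtain ⟨t, ht⟩ := hQ.elim_finite_subcover _ hVopen hQcov
  refine ⟨t.sup id + (k₀ + k₀), ?_⟩
  intro g hg
  obtain ⟨k, hkt, hgk⟩ := Set.mem_iUnion₂.1 (ht hg)
  have hmono : ∀ k₁ k₂ : ℕ, k₁ ≤ k₂ → T ^ k₁ ⊆ T ^ k₂ := by
    intro k₁ k₂ hle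
    induction hle with
    | refl => exact subset_rfl
    | step _ ih =>
      refine ih.trans ?_
      rename_i k₂' _
      intro y hy
      rw [pow_succ]
      simpa using Set.mul_mem_mul hy h1
  have : g ∈ T ^ (t.sup id) * U :=
    Set.mul_subset_mul_right (hmono k (t.sup id) (Finset.le_sup (f := id) hkt)) hgk
  rw [pow_add]
  exact Set.mul_subset_mul_left hUsub this

/-- Let `G` be a compactly presented t.d.l.c. group and `H` a group retract
of `G`: a closed subgroup for which there is a continuous epimorphism `ρ : G → H` restricting
to the identity on `H`.  Then `H` is compactly presented. -/
theorem retract_compactlyPresented (G : Type) [Group G] [TopologicalSpace G] [IsTopologicalGroup G]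
    [LocallyCompactSpace G] [TotallyDisconnectedSpace G] [T2Space G]
    (hG : CompactlyPresentedGroup G)
    (H : Subgroup G) (hH : IsClosed (H : Set G))
    (ρ : G →* ↥H) (hρcont : Continuous ρ) (hρsurj : Function.Surjective ρ)
    (hρretr : ∀ h : ↥H, ρ (h : G) = h) :
    CompactlyPresentedGroup (↥H) := by
  obtain ⟨S, hScomp, hπsurj, n, hSrel⟩ := hG
  set π : FreeGroup S →* G := FreeGroup.lift (fun s : S => (s : G)) with hπdef
  have hSgen : Subgroup.closure S = ⊤ := by
    have h := FreeGroup.range_lift_eq_closure (f := fun s : S => (s : G))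
    rw [Subtype.range_coe] at h
    rw [← h]
    exact MonoidHom.range_eq_top.2 hπsurj
  set T : Set ↥H := ρ '' S with hTdef
  have hTcomp : IsCompact T := hScomp.image hρcont
  set σ : FreeGroup T →* ↥H := FreeGroup.lift (fun t : T => (t : ↥H)) with hσdef
  have hφmem : ∀ s : S, ρ (s : G) ∈ T := fun s => ⟨s, s.2, rfl⟩
  set φ : S → T := fun s => ⟨ρ (s : G), hφmem s⟩ with hφdef
  set f : FreeGroup S →* FreeGroup T := FreeGroup.map φ with hfdef
  have hcomm : ∀ w : FreeGroup S, σ (f w) = ρ (π w) := by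
    have h : σ.comp f = ρ.comp π := by
      apply FreeGroup.ext_hom
      intro s
      simp only [MonoidHom.comp_apply, hfdef, hπdef, hσdef, FreeGroup.map.of,
        FreeGroup.lift_apply_of, hφdef]
    intro w
    exact DFunLike.congr_fun h w
  have hfsurj : Function.Surjective f := by
    rw [← MonoidHom.range_eq_top, eq_top_iff]
    have htop : Subgroup.closure (Set.range (FreeGroup.of : T → FreeGroup T)) = ⊤ := by
      rw [← FreeGroup.range_lift_eq_closure, FreeGroup.lift_of_eq_id]
      exact MonoidHom.range_eq_top.2 (fun x => ⟨x, rfl⟩)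
    rw [← htop, Subgroup.closure_le]
    rintro _ ⟨t, rfl⟩
    obtain ⟨s, hs, hst⟩ := t.2
    refine ⟨FreeGroup.of ⟨s, hs⟩, ?_⟩
    rw [hfdef]
    show FreeGroup.map φ (FreeGroup.of ⟨s, hs⟩) = FreeGroup.of t
    rw [FreeGroup.map.of]
    congr 1
    exact Subtype.ext hst
  have hσsurj : Function.Surjective σ := by
    intro h
    obtain ⟨g, rfl⟩ := hρsurj h
    obtain ⟨w, rfl⟩ := hπsurj g
    exact ⟨f w, hcomm w⟩
  -- kernel of ρ is normally generated by C
  set C : Set G := (fun g : G => g⁻¹ * (↑(ρ g) : G)) '' S with hCdef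
  set N : Subgroup G := Subgroup.normalClosure C with hNdef
  have hkerρ : ∀ g : G, ρ g = 1 → g ∈ N := by
    have hq : ∀ x : G, QuotientGroup.mk' N x = QuotientGroup.mk' N (↑(ρ x) : G) := by
      intro x
      have hx : x ∈ Subgroup.closure S := hSgen ▸ Subgroup.mem_top x
      refine Subgroup.closure_induction
        (p := fun x _ => QuotientGroup.mk' N x = QuotientGroup.mk' N (↑(ρ x) : G))
        ?_ ?_ ?_ ?_ hx
      · intro s hs
        refine (QuotientGroup.mk'_eq_mk' N).2 ⟨s⁻¹ * (↑(ρ s) : G), ?_, by group⟩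
        exact Subgroup.subset_normalClosure ⟨s, hs, rfl⟩
      · simp
      · intro x y _ _ hx' hy'
        rw [map_mul, hx', hy', ← map_mul]
        congr 1
        rw [map_mul]
        rfl
      · intro x _ hx'
        rw [map_inv, hx', ← map_inv]
        congr 1
        rw [map_inv]
        rfl
    intro g hg
    have h := hq g
    rw [hg] at h
    have h1 : QuotientGroup.mk' N g = 1 := by simpa using h
    rwa [← MonoidHom.mem_ker, QuotientGroup.ker_mk'] at h1
  -- short words for elements of T
  have hQcomp : IsCompact ((fun h : ↥H => (h : G)) '' T) := hTcomp.image continuous_subtype_val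
  obtain ⟨m, hm⟩ := compact_subset_pow hScomp hSgen hQcomp
  have hWex : ∀ s : S, ∃ l : List (S × Bool),
      π (FreeGroup.mk l) = (↑(ρ (s : G)) : G) ∧ l.length ≤ m := by
    intro s
    exact word_of_mem_pow S m _ (hm ⟨ρ (s : G), hφmem s, rfl⟩)
  choose W hW1 hW2 using hWex
  set Rset : Set (FreeGroup S) := {w | π w = 1 ∧
      ∃ l : List (S × Bool), FreeGroup.mk l = w ∧ l.length ≤ n} with hRsetdef
  set D : Set (FreeGroup S) :=
      Set.range (fun s : S => (FreeGroup.of s)⁻¹ * FreeGroup.mk (W s)) with hDdef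
  set N₁ : Subgroup (FreeGroup S) := Subgroup.normalClosure (Rset ∪ D) with hN₁def
  have hπD : ∀ s : S, π ((FreeGroup.of s)⁻¹ * FreeGroup.mk (W s))
      = (s : G)⁻¹ * (↑(ρ (s : G)) : G) := by
    intro s
    rw [map_mul, map_inv, hW1]
    congr 1
    rw [hπdef, FreeGroup.lift_apply_of]
  have hclaim1 : ∀ u : FreeGroup S, ρ (π u) = 1 → u ∈ N₁ := by
    intro u hu
    have h1 : π u ∈ N := hkerρ _ hu
    have h2 : N ≤ Subgroup.map π N₁ := by
      rw [hN₁def, Subgroup.map_normalClosure _ _ hπsurj, hNdef]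
      apply Subgroup.normalClosure_le_normal
      rintro _ ⟨s, hs, rfl⟩
      apply Subgroup.subset_normalClosure
      exact ⟨(FreeGroup.of (⟨s, hs⟩ : S))⁻¹ * FreeGroup.mk (W ⟨s, hs⟩),
        Or.inr ⟨⟨s, hs⟩, rfl⟩, hπD ⟨s, hs⟩⟩
    obtain ⟨v, hv, hvu⟩ := h2 h1
    have h3 : u * v⁻¹ ∈ MonoidHom.ker π := by
      rw [MonoidHom.mem_ker, map_mul, map_inv, hvu]
      group
    have h4 : u * v⁻¹ ∈ N₁ := by
      rw [← hSrel] at h3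
      exact Subgroup.normalClosure_mono Set.subset_union_left h3
    have h5 := mul_mem h4 hv
    simpa using h5
  refine ⟨T, hTcomp, hσsurj, max n (m + 1), ?_⟩
  apply le_antisymm
  · apply Subgroup.normalClosure_le_normal
    intro w hw
    exact hw.1
  · intro w hw
    obtain ⟨u, rfl⟩ := hfsurj w
    rw [MonoidHom.mem_ker] at hw
    have hu : ρ (π u) = 1 := by rw [← hcomm]; exact hw
    have h5 : u ∈ N₁ := hclaim1 u hu
    have h6 : f '' (Rset ∪ D) ⊆ {w : FreeGroup T | σ w = 1 ∧
        ∃ l : List (T × Bool), FreeGroup.mk l = w ∧ l.length ≤ max n (m + 1)} := by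
      rintro _ ⟨r, hr, rfl⟩
      rcases hr with hr | hr
      · obtain ⟨hr1, l, hl, hlen⟩ := hr
        refine ⟨by rw [hcomm, hr1, map_one], l.map (fun x => (φ x.1, x.2)), ?_, ?_⟩
        · rw [← hl, hfdef]
          exact (FreeGroup.map.mk).symm
        · rw [List.length_map]
          exact hlen.trans (le_max_left _ _)
      · obtain ⟨s, rfl⟩ := hr
        constructor
        · rw [hcomm, hπD s, map_mul, map_inv, hρretr]
          simp
        · refine ⟨((s, false) :: W s).map (fun x => (φ x.1, x.2)), ?_, ?_⟩
          · show FreeGroup.mk _ = f ((FreeGroup.of s)⁻¹ * FreeGroup.mk (W s))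
            have hmk : (FreeGroup.of s)⁻¹ * FreeGroup.mk (W s)
                = FreeGroup.mk ((s, false) :: W s) := by
              have h7 : (FreeGroup.of s)⁻¹ = FreeGroup.mk [(s, false)] := by
                rw [FreeGroup.of, FreeGroup.inv_mk]
                simp [FreeGroup.invRev]
              rw [h7, FreeGroup.mul_mk]
              rfl
            rw [hmk, hfdef]
            exact (FreeGroup.map.mk).symm
          · rw [List.length_map, List.length_cons]
            have := hW2 s
            refine le_trans ?_ (le_max_right n (m + 1))
            omega
    have h7 : Subgroup.map f N₁ ≤ Subgroup.normalClosure {w : FreeGroup T | σ w = 1 ∧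
        ∃ l : List (T × Bool), FreeGroup.mk l = w ∧ l.length ≤ max n (m + 1)} := by
      rw [hN₁def, Subgroup.map_normalClosure _ _ hfsurj]
      exact Subgroup.normalClosure_le_normal (h6.trans Subgroup.subset_normalClosure)
    exact h7 ⟨u, h5, rfl⟩
end
end

section
/- Let (H_n) be a sequence of t.d.l.c. groups with quotient maps h_n : H_n → H_{n+1}, and suppose the abstract colimit H of this sequence, equipped with the quotient topology, is Hausdorff (hence a t.d.l.c. group). If G is a compactly presented t.d.l.c. group, then any continuous homomorphism f : G → H factors through one of the canonical maps H_n → H, i.e. f = k_n ∘ g for some n and some continuous homomorphism g : G → H_n. -/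
noncomputable section

open scoped Pointwise

/-- Iterated transition map `H n → H (n + j)` of a sequence of groups. -/
def seqTransition {H : ℕ → Type} [∀ n, Group (H n)] (h : ∀ n, H n →* H (n+1)) :
    ∀ (n j : ℕ), H n →* H (n + j)
  | _, 0 => MonoidHom.id _
  | n, (j+1) => (h (n + j)).comp (seqTransition h n j)


private lemma isCompact_pow' {G : Type} [Group G] [TopologicalSpace G] [IsTopologicalGroup G]
    {T : Set G} (hT : IsCompact T) : ∀ m : ℕ, IsCompact (T ^ m)
  | 0 => by rw [pow_zero, ← Set.singleton_one]; exact isCompact_singleton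
  | (m+1) => by rw [pow_succ]; exact (isCompact_pow' hT m).mul hT

private lemma exists_subgroup_of_compact_subset {G : Type} [Group G] [TopologicalSpace G]
    [IsTopologicalGroup G] [LocallyCompactSpace G] [T2Space G]
    (N : ℕ → Subgroup G) (hmono : Monotone N) (hclosed : ∀ j, IsClosed (N j : Set G))
    (hunion : ∀ x : G, ∃ j, x ∈ N j) {E : Set G} (hE : IsCompact E) :
    ∃ j, E ⊆ (N j : Set G) := by
  haveI : Nonempty G := ⟨1⟩
  have huniv : ⋃ j, (N j : Set G) = Set.univ :=
    Set.eq_univ_of_forall fun x => Set.mem_iUnion.2 (hunion x)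
  obtain ⟨j₀, x₀, hx₀⟩ := nonempty_interior_of_iUnion_of_closed hclosed huniv
  have hopen : IsOpen (N j₀ : Set G) :=
    Subgroup.isOpen_of_mem_nhds (N j₀) (mem_interior_iff_mem_nhds.1 hx₀)
  have hcov : E ⊆ ⋃ x : E, (x : G) • (N j₀ : Set G) := by
    intro y hy
    refine Set.mem_iUnion.2 ⟨⟨y, hy⟩, ?_⟩
    rw [Set.mem_smul_set_iff_inv_smul_mem, smul_eq_mul, inv_mul_cancel]
    exact Subgroup.one_mem _
  obtain ⟨t, ht⟩ := hE.elim_finite_subcover _ (fun x : E => hopen.smul _) hcov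
  choose jx hjx using fun x : E => hunion (x : G)
  refine ⟨max j₀ (t.sup jx), fun y hy => ?_⟩
  obtain ⟨x, hxt, hx⟩ := Set.mem_iUnion₂.1 (ht hy)
  obtain ⟨ν, hν, rfl⟩ := hx
  show (x : G) • ν ∈ _
  rw [smul_eq_mul]
  exact Subgroup.mul_mem _
    (hmono (le_max_of_le_right (Finset.le_sup hxt)) (hjx x))
    (hmono (le_max_left _ _) hν)

/-- Let `(H_n)` be a sequence of t.d.l.c. groups with quotient maps
`h_n : H_n → H_{n+1}`, and suppose the abstract colimit `H` of this sequence, equipped with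
the quotient topology, is Hausdorff (hence a t.d.l.c. group).  If `G` is a compactly presented
t.d.l.c. group, then any continuous homomorphism `f : G → H` factors through one of the
canonical maps `k_n : H_n → H`. -/
theorem compactlyPresented_factors_through_colimit
    (H : ℕ → Type) [∀ n, Group (H n)] [∀ n, TopologicalSpace (H n)]
    [∀ n, IsTopologicalGroup (H n)] [∀ n, LocallyCompactSpace (H n)]
    [∀ n, TotallyDisconnectedSpace (H n)] [∀ n, T2Space (H n)]
    (h : ∀ n, H n →* H (n+1))
    (hcont : ∀ n, Continuous (h n)) (hsurj : ∀ n, Function.Surjective (h n))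
    (hopen : ∀ n, IsOpenMap (h n))
    (L : Type) [Group L] [TopologicalSpace L] [IsTopologicalGroup L]
    [LocallyCompactSpace L] [TotallyDisconnectedSpace L] [T2Space L]
    (k : ∀ n, H n →* L) (hkcont : ∀ n, Continuous (k n))
    (hcompat : ∀ n, (k (n+1)).comp (h n) = k n)
    -- `L` is the abstract colimit of the sequence:
    (hjoint : Function.Surjective (k 0))
    (heventual : ∀ (n : ℕ) (x y : H n), k n x = k n y →
      ∃ j : ℕ, seqTransition h n j x = seqTransition h n j y)
    -- `L` carries the quotient topology:
    (htop : ∀ U : Set L, IsOpen U ↔ IsOpen ((k 0) ⁻¹' U))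
    (G : Type) [Group G] [TopologicalSpace G] [IsTopologicalGroup G]
    [LocallyCompactSpace G] [TotallyDisconnectedSpace G] [T2Space G] (hG : CompactlyPresentedGroup G)
    (f : G →* L) (hf : Continuous f) :
    ∃ (n : ℕ) (g : G →* H n), Continuous g ∧ (k n).comp g = f := by
  classical
  obtain ⟨S, hScpt, hπsurj, n₀, hpres⟩ := hG
  set π : FreeGroup S →* G := FreeGroup.lift (fun s : S => (s : G)) with hπdef
  -- compatibility of k with iterated transition maps
  have hBcompat : ∀ (n j : ℕ) (x : H n), k (n + j) (seqTransition h n j x) = k n x := by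
    intro n j
    induction j with
    | zero => intro x; rfl
    | succ j ih =>
      intro x
      have h1 : seqTransition h n (j+1) x = h (n+j) (seqTransition h n j x) := rfl
      rw [h1, ← ih x]
      exact DFunLike.congr_fun (hcompat (n+j)) (seqTransition h n j x)
  have htransCont : ∀ n j, Continuous (seqTransition h n j) := by
    intro n j
    induction j with
    | zero => exact continuous_id
    | succ j ih => exact (hcont (n+j)).comp ih
  have hkerTrans_mono : ∀ (n : ℕ) {j j' : ℕ}, j ≤ j' → ∀ x : H n,
      seqTransition h n j x = 1 → seqTransition h n j' x = 1 := by
    intro n j j' hjj'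
    induction hjj' with
    | refl => exact fun x hx => hx
    | step _ ih =>
      intro x hx
      show h _ (seqTransition h n _ x) = 1
      rw [ih x hx, map_one]
  -- the quotient-topology property and openness of the maps k (0 + j)
  have hquot : ∀ (j : ℕ) {U : Set L}, IsOpen ((k (0+j)) ⁻¹' U) → IsOpen U := by
    intro j U hU
    rw [htop]
    have heq : (k 0) ⁻¹' U = (seqTransition h 0 j) ⁻¹' ((k (0+j)) ⁻¹' U) := by
      ext x
      simp only [Set.mem_preimage, hBcompat 0 j x]
    rw [heq]
    exact hU.preimage (htransCont 0 j)
  have hopenMap : ∀ (j : ℕ), IsOpenMap (k (0+j)) := by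
    intro j V hV
    apply hquot j
    have himg : (k (0+j)) ⁻¹' ((k (0+j)) '' V)
        = (MonoidHom.ker (k (0+j)) : Set (H (0+j))) * V := by
      ext x
      constructor
      · rintro ⟨v, hv, hkv⟩
        exact ⟨x * v⁻¹, by simp [MonoidHom.mem_ker, map_mul, map_inv, hkv],
          v, hv, inv_mul_cancel_right x v⟩
      · rintro ⟨ν, hν, v, hv, rfl⟩
        exact ⟨v, hv, by simp [map_mul, MonoidHom.mem_ker.1 hν]⟩
    rw [himg]
    exact hV.mul_left
  -- compact subsets of kernels are eventually killed
  have hEventKill : ∀ (n : ℕ) (E : Set (H n)), IsCompact E → (∀ x ∈ E, k n x = 1) →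
      ∃ j, ∀ x ∈ E, seqTransition h n j x = 1 := by
    intro n E hEcpt hEker
    set K : Subgroup (H n) := MonoidHom.ker (k n) with hK
    have hKclosed : IsClosed (K : Set (H n)) := by
      have heq : (K : Set (H n)) = (k n) ⁻¹' {1} := by
        ext x; simp [hK, MonoidHom.mem_ker]
      rw [heq]
      exact isClosed_singleton.preimage (hkcont n)
    haveI : LocallyCompactSpace K := hKclosed.locallyCompactSpace
    set N : ℕ → Subgroup K := fun j => (MonoidHom.ker (seqTransition h n j)).subgroupOf K
      with hN
    have hNclosed : ∀ j, IsClosed (N j : Set K) := by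
      intro j
      have heq : (N j : Set K) = (fun x : K => seqTransition h n j (x : H n)) ⁻¹' {1} := by
        ext x
        simp [hN, Subgroup.mem_subgroupOf, MonoidHom.mem_ker]
      rw [heq]
      exact isClosed_singleton.preimage ((htransCont n j).comp continuous_subtype_val)
    have hNmono : Monotone N := by
      intro a b hab x hx
      simp only [hN, Subgroup.mem_subgroupOf, MonoidHom.mem_ker] at hx ⊢
      exact hkerTrans_mono n hab _ hx
    have hNunion : ∀ x : K, ∃ j, x ∈ N j := by
      intro x
      obtain ⟨j, hj⟩ := heventual n (x : H n) 1
        (by simpa [map_one] using MonoidHom.mem_ker.1 x.2)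
      refine ⟨j, ?_⟩
      simp only [hN, Subgroup.mem_subgroupOf, MonoidHom.mem_ker]
      simpa [map_one] using hj
    have hEsub : E ⊆ Set.range (Subtype.val : K → H n) := by
      intro x hx
      exact ⟨⟨x, MonoidHom.mem_ker.2 (hEker x hx)⟩, rfl⟩
    have hE'cpt : IsCompact ((Subtype.val : K → H n) ⁻¹' E) := by
      rw [Topology.IsEmbedding.subtypeVal.isCompact_iff]
      rwa [Set.image_preimage_eq_of_subset hEsub]
    obtain ⟨j, hj⟩ := exists_subgroup_of_compact_subset N hNmono hNclosed hNunion hE'cpt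
    refine ⟨j, fun x hx => ?_⟩
    have hxK : x ∈ K := MonoidHom.mem_ker.2 (hEker x hx)
    have hmem : (⟨x, hxK⟩ : K) ∈ N j := hj hx
    simpa [hN, Subgroup.mem_subgroupOf, MonoidHom.mem_ker] using hmem
  -- compact sets of L lift to compact sets of H 0
  have hliftCompact : ∀ C : Set L, IsCompact C → ∃ C' : Set (H 0), IsCompact C' ∧
      ∀ c ∈ C, ∃ x ∈ C', k 0 x = c := by
    intro C hC
    choose Kx hKxcpt hKxnhds using fun x : H 0 => exists_compact_mem_nhds x
    choose xl hxl using hjoint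
    have hcover : C ⊆ ⋃ c : C, (k 0) '' interior (Kx (xl (c : L))) := by
      intro c hc
      exact Set.mem_iUnion.2 ⟨⟨c, hc⟩,
        ⟨xl c, mem_interior_iff_mem_nhds.2 (hKxnhds _), hxl c⟩⟩
    obtain ⟨t, ht⟩ := hC.elim_finite_subcover _
      (fun c : C => hopenMap 0 _ isOpen_interior) hcover
    refine ⟨(⋃ c ∈ t, Kx (xl (c : L))) ∩ (k 0) ⁻¹' C, ?_, ?_⟩
    · exact (t.isCompact_biUnion fun c _ => hKxcpt _).inter_right
        (hC.isClosed.preimage (hkcont 0))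
    · intro c hc
      obtain ⟨i, hit, y, hy, hky⟩ := Set.mem_iUnion₂.1 (ht hc)
      exact ⟨y, ⟨Set.mem_biUnion hit (interior_subset hy), by simp [hky, hc]⟩, hky⟩
  -- lift the generators
  obtain ⟨C', hC'cpt, hC'lift⟩ := hliftCompact (f '' S) (hScpt.image hf)
  have hσ' : ∀ s : S, ∃ x ∈ C', k 0 x = f s := fun s => hC'lift (f s) ⟨s, s.2, rfl⟩
  choose σ hσC hσk using hσ'
  set φ : FreeGroup S →* H 0 := FreeGroup.lift σ with hφdef
  have hkφ : ∀ w, k 0 (φ w) = f (π w) := by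
    have heq : (k 0).comp φ = f.comp π := by
      apply FreeGroup.ext_hom
      intro a
      simp [hφdef, hπdef, hσk]
    intro w
    exact DFunLike.congr_fun heq w
  -- relator words land in a compact subset of the kernel of k 0
  set T₀ : Set (H 0) := C' ∪ C'⁻¹ ∪ {1} with hT₀def
  have h1T₀ : (1 : H 0) ∈ T₀ := by simp [hT₀def]
  have hT₀cpt : IsCompact T₀ := (hC'cpt.union hC'cpt.inv).union isCompact_singleton
  have hφmk : ∀ l : List (S × Bool), φ (FreeGroup.mk l) ∈ T₀ ^ l.length := by
    intro l
    rw [hφdef]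
    rw [FreeGroup.lift_mk]
    induction l with
    | nil => simpa [pow_zero] using Set.mem_one.2 rfl
    | cons hd tl ih =>
      rw [List.map_cons, List.prod_cons, List.length_cons, pow_succ']
      refine Set.mul_mem_mul ?_ ih
      rcases hd with ⟨s, b⟩
      cases b
      · exact Or.inl (Or.inr (Set.inv_mem_inv.2 (hσC s)))
      · exact Or.inl (Or.inl (hσC s))
  obtain ⟨j₁, hj₁⟩ := hEventKill 0 ((T₀ ^ n₀) ∩ (k 0) ⁻¹' {1})
    ((isCompact_pow' hT₀cpt n₀).inter_right (isClosed_singleton.preimage (hkcont 0)))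
    (fun x hx => hx.2)
  set trans₁ := seqTransition h 0 j₁ with htrans₁def
  set ψ : FreeGroup S →* H (0 + j₁) := trans₁.comp φ with hψdef
  have hkerle : MonoidHom.ker π ≤ MonoidHom.ker ψ := by
    rw [← hpres]
    apply Subgroup.normalClosure_le_normal
    rintro w ⟨hw1, l, hl, hlen⟩
    have hmem : φ w ∈ (T₀ ^ n₀) ∩ (k 0) ⁻¹' {1} := by
      constructor
      · rw [← hl]
        exact Set.pow_subset_pow_right h1T₀ hlen (hφmk l)
      · simp only [Set.mem_preimage, Set.mem_singleton_iff, hkφ w, hw1, map_one]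
    exact MonoidHom.mem_ker.2 (hj₁ _ hmem)
  set g₁ : G →* H (0 + j₁) := (π.liftOfRightInverse (Function.surjInv hπsurj)
      (Function.rightInverse_surjInv hπsurj)) ⟨ψ, hkerle⟩ with hg₁def
  have hg₁π : ∀ w, g₁ (π w) = ψ w := fun w =>
    π.liftOfRightInverse_comp_apply _ _ ⟨ψ, hkerle⟩ w
  have hkg₁ : ∀ x, k (0 + j₁) (g₁ x) = f x := by
    intro x
    obtain ⟨w, rfl⟩ := hπsurj x
    rw [hg₁π w]
    show k (0 + j₁) (trans₁ (φ w)) = f (π w)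
    rw [htrans₁def, hBcompat 0 j₁ (φ w), hkφ w]
  -- a compact neighborhood of 1 in G, and the word bound on it
  obtain ⟨U₀, hU₀cpt, hU₀nhds⟩ := exists_compact_mem_nhds (1 : G)
  set T : Set G := S ∪ S⁻¹ ∪ {1} with hTdef
  have h1T : (1 : G) ∈ T := by simp [hTdef]
  have hTcpt : IsCompact T := (hScpt.union hScpt.inv).union isCompact_singleton
  have hTsymm : T⁻¹ = T := by
    ext x
    simp only [hTdef, Set.mem_inv, Set.mem_union, Set.mem_singleton_iff, inv_eq_one, inv_inv]
    tauto
  have hmemT : ∀ x : G, ∃ m, x ∈ T ^ m := by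
    intro x
    obtain ⟨w, rfl⟩ := hπsurj x
    induction w using FreeGroup.induction_on with
    | C1 => exact ⟨0, by simpa [map_one, pow_zero] using Set.mem_one.2 rfl⟩
    | of s =>
      refine ⟨1, ?_⟩
      rw [pow_one]
      show π (FreeGroup.of s) ∈ T
      rw [show π (FreeGroup.of s) = (s : G) from by simp [hπdef]]
      exact Or.inl (Or.inl s.2)
    | inv_of s _ =>
      refine ⟨1, ?_⟩
      rw [pow_one]
      show π (FreeGroup.of s)⁻¹ ∈ T
      rw [map_inv, show π (FreeGroup.of s) = (s : G) from by simp [hπdef]]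
      exact Or.inl (Or.inr (Set.inv_mem_inv.2 s.2))
    | mul x y ihx ihy =>
      obtain ⟨a, ha⟩ := ihx
      obtain ⟨b, hb⟩ := ihy
      refine ⟨a + b, ?_⟩
      rw [map_mul, pow_add]
      exact Set.mul_mem_mul ha hb
  haveI : Nonempty G := ⟨1⟩
  obtain ⟨m₀, y₀, hy₀⟩ := nonempty_interior_of_iUnion_of_closed
    (fun m => (isCompact_pow' hTcpt m).isClosed)
    (Set.eq_univ_of_forall fun x => Set.mem_iUnion.2 (hmemT x))
  have hy₀T : y₀ ∈ T ^ m₀ := interior_subset hy₀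
  have hy₀inv : y₀⁻¹ ∈ T ^ m₀ := by
    rw [← hTsymm, inv_pow]
    exact Set.inv_mem_inv.2 hy₀T
  have hcovU : U₀ ⊆ ⋃ x : U₀, ((x : G) * y₀⁻¹) • interior (T ^ m₀) := by
    intro u hu
    refine Set.mem_iUnion.2 ⟨⟨u, hu⟩, ?_⟩
    rw [Set.mem_smul_set_iff_inv_smul_mem, smul_eq_mul]
    have heq : (u * y₀⁻¹)⁻¹ * u = y₀ := by group
    rw [heq]
    exact hy₀
  obtain ⟨t, ht⟩ := hU₀cpt.elim_finite_subcover _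
    (fun x : U₀ => isOpen_interior.smul ((x : G) * y₀⁻¹)) hcovU
  choose mfun hmfun using hmemT
  set M : ℕ := (t.sup fun x => mfun (x : G)) + m₀ + m₀ with hMdef
  have hU₀pow : U₀ ⊆ T ^ M := by
    intro u hu
    obtain ⟨x, hxt, hx⟩ := Set.mem_iUnion₂.1 (ht hu)
    obtain ⟨v, hv, rfl⟩ := hx
    show ((x : G) * y₀⁻¹) • v ∈ T ^ M
    rw [smul_eq_mul]
    have h1 : (x : G) ∈ T ^ mfun (x : G) := hmfun _
    have h2 : (x : G) * y₀⁻¹ * v ∈ T ^ (mfun (x : G) + m₀ + m₀) := by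
      rw [pow_add, pow_add]
      exact Set.mul_mem_mul (Set.mul_mem_mul h1 hy₀inv) (interior_subset hv)
    exact Set.pow_subset_pow_right h1T
      (by
        rw [hMdef]
        have h3 : mfun (x : G) ≤ t.sup fun x : U₀ => mfun (x : G) :=
          Finset.le_sup (f := fun x : U₀ => mfun (x : G)) hxt
        omega) h2
  -- g₁ maps word balls to word balls, so it is bounded on U₀
  set C₁ : Set (H (0 + j₁)) := trans₁ '' C' with hC₁def
  have hC₁cpt : IsCompact C₁ := hC'cpt.image (htransCont 0 j₁)
  set T' : Set (H (0 + j₁)) := C₁ ∪ C₁⁻¹ ∪ {1} with hT'def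
  have hT'cpt : IsCompact T' := (hC₁cpt.union hC₁cpt.inv).union isCompact_singleton
  have hgS : ∀ x (hx : x ∈ S), g₁ x ∈ C₁ := by
    intro x hx
    have heq : x = π (FreeGroup.of (⟨x, hx⟩ : S)) := by simp [hπdef]
    rw [heq, hg₁π]
    have heq2 : ψ (FreeGroup.of (⟨x, hx⟩ : S)) = trans₁ (σ ⟨x, hx⟩) := by
      simp [hψdef, hφdef]
    rw [heq2]
    exact ⟨σ ⟨x, hx⟩, hσC _, rfl⟩
  have hgT : ∀ x ∈ T, g₁ x ∈ T' := by
    intro x hx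
    rcases hx with (hx | hx) | hx
    · exact Or.inl (Or.inl (hgS x hx))
    · have hxi : x⁻¹ ∈ S := hx
      have : g₁ x = (g₁ x⁻¹)⁻¹ := by rw [← map_inv, inv_inv]
      rw [this]
      exact Or.inl (Or.inr (Set.inv_mem_inv.2 (hgS _ hxi)))
    · rw [Set.mem_singleton_iff.1 hx, map_one]
      exact Or.inr rfl
  have hgTpow : ∀ m, ∀ x ∈ T ^ m, g₁ x ∈ T' ^ m := by
    intro m
    induction m with
    | zero =>
      intro x hx
      rw [pow_zero] at hx ⊢
      rw [Set.mem_one.1 hx, map_one]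
      exact Set.mem_one.2 rfl
    | succ m ih =>
      intro x hx
      rw [pow_succ] at hx ⊢
      obtain ⟨a, ha, b, hb, rfl⟩ := hx
      rw [map_mul]
      exact Set.mul_mem_mul (ih a ha) (hgT b hb)
  have hDcpt : IsCompact (T' ^ M) := isCompact_pow' hT'cpt M
  have hgU₀ : ∀ x ∈ U₀, g₁ x ∈ T' ^ M := fun x hx => hgTpow M x (hU₀pow hx)
  -- choose the second jump
  obtain ⟨V₀, hV₀cpt, hV₀nhds⟩ := exists_compact_mem_nhds (1 : H (0 + j₁))
  obtain ⟨j₂, hj₂⟩ := hEventKill (0 + j₁) ((T' ^ M * V₀⁻¹) ∩ (k (0 + j₁)) ⁻¹' {1})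
    ((hDcpt.mul hV₀cpt.inv).inter_right (isClosed_singleton.preimage (hkcont _)))
    (fun x hx => hx.2)
  set trans₂ := seqTransition h (0 + j₁) j₂ with htrans₂def
  refine ⟨0 + j₁ + j₂, trans₂.comp g₁, ?_, ?_⟩
  · -- continuity
    apply continuous_of_continuousAt_one (trans₂.comp g₁)
    have h1 : (trans₂.comp g₁) 1 = 1 := map_one _
    rw [ContinuousAt, h1, Filter.tendsto_def]
    intro W hW
    obtain ⟨W', hW'sub, hW'open, hW'1⟩ := mem_nhds_iff.1 hW
    set V : Set (H (0 + j₁)) := trans₂ ⁻¹' W' ∩ interior V₀ with hVdef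
    have hVopen : IsOpen V := (hW'open.preimage (htransCont _ _)).inter isOpen_interior
    have h1V : (1 : H (0 + j₁)) ∈ V :=
      ⟨by simpa [map_one] using hW'1, mem_interior_iff_mem_nhds.2 hV₀nhds⟩
    set A : Set G := f ⁻¹' ((k (0 + j₁)) '' V) ∩ interior U₀ with hAdef
    have hAopen : IsOpen A := ((hopenMap j₁ V hVopen).preimage hf).inter isOpen_interior
    have h1A : (1 : G) ∈ A :=
      ⟨⟨1, h1V, by simp⟩, mem_interior_iff_mem_nhds.2 hU₀nhds⟩
    refine Filter.mem_of_superset (hAopen.mem_nhds h1A) ?_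
    rintro x ⟨hxV, hxU⟩
    obtain ⟨v, hvV, hkv⟩ := hxV
    have hgx : g₁ x ∈ T' ^ M := hgU₀ x (interior_subset hxU)
    have hν : g₁ x * v⁻¹ ∈ (T' ^ M * V₀⁻¹) ∩ (k (0 + j₁)) ⁻¹' {1} := by
      constructor
      · exact Set.mul_mem_mul hgx (Set.inv_mem_inv.2 (interior_subset hvV.2))
      · simp only [Set.mem_preimage, Set.mem_singleton_iff, map_mul, map_inv, hkv, hkg₁,
          mul_inv_cancel]
    have hkill := hj₂ _ hν
    show (trans₂.comp g₁) x ∈ W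
    have heq : (trans₂.comp g₁) x = trans₂ v := by
      show trans₂ (g₁ x) = trans₂ v
      calc trans₂ (g₁ x) = trans₂ ((g₁ x * v⁻¹) * v) := by rw [inv_mul_cancel_right]
        _ = trans₂ (g₁ x * v⁻¹) * trans₂ v := map_mul _ _ _
        _ = trans₂ v := by rw [hkill, one_mul]
    rw [heq]
    exact hW'sub hvV.1
  · -- the factorization
    ext x
    show k (0 + j₁ + j₂) (trans₂ (g₁ x)) = f x
    rw [htrans₂def, hBcompat (0 + j₁) j₂ (g₁ x), hkg₁ x]
end
end
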